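/- arXiv:2212.10673 — 10 statements merged into one kernel-verified Lean document; each statement's English description precedes it below -/
import Mathlib

section
/- If T is the projection onto ℝⁿ of a non-vertical face F of the epigraph of a convex function −f (i.e., the direction (0,1) is not in the affine hull of F), and T' is a face of the polyhedron T, then T' is also the projection of a non-vertical face of epi(−f). -/
noncomputable section
open Set

abbrev V (n : ℕ) := EuclideanSpace ℝ (Fin n)

/-- A polyhedron: finite intersection of closed half-spaces. -/
def IsPolyhedron {E : Type*} [AddCommGroup E] [Module ℝ E] (P : Set E) : Prop :=
  ∃ (m : ℕ) (L : Fin m → E →ₗ[ℝ] ℝ) (b : Fin m → ℝ), P = {x | ∀ i, L i x ≤ b i}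

/-- Epigraph of a real-valued function. -/
def epi {n : ℕ} (g : V n → ℝ) : Set (V n × ℝ) := {p | g p.1 ≤ p.2}

/-- `F` is a non-vertical face of `P`: an exposed face, nonempty, whose affine hull
does not contain the vertical direction `(0, 1)`. -/
def NonVerticalFace {n : ℕ} (P F : Set (V n × ℝ)) : Prop :=
  IsExposed ℝ P F ∧ F.Nonempty ∧
    ((0 : V n), (1 : ℝ)) ∉ (affineSpan ℝ F).direction

/-- `T` is an action set of `negf`: the projection to `ℝⁿ` of a non-vertical face
of `epi negf`. -/
def ActionSet {n : ℕ} (negf : V n → ℝ) (T : Set (V n)) : Prop :=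
  ∃ F : Set (V n × ℝ), NonVerticalFace (epi negf) F ∧ T = Prod.fst '' F



lemma face_eq_active {E : Type*} [NormedAddCommGroup E] [NormedSpace ℝ E]
    {ι : Type*} [Fintype ι] (L : ι → E →ₗ[ℝ] ℝ) (b : ι → ℝ) (f : E →L[ℝ] ℝ)
    (hne : {x ∈ {x | ∀ i, L i x ≤ b i} | ∀ y ∈ {x | ∀ i, L i x ≤ b i}, f y ≤ f x}.Nonempty) :
    ∃ I : Finset ι,
      {x ∈ {x | ∀ i, L i x ≤ b i} | ∀ y ∈ {x | ∀ i, L i x ≤ b i}, f y ≤ f x}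
        = {x ∈ {x | ∀ i, L i x ≤ b i} | ∀ i ∈ I, L i x = b i} := by
  classical
  set P : Set E := {x | ∀ i, L i x ≤ b i} with hP
  set F : Set E := {x ∈ P | ∀ y ∈ P, f y ≤ f x} with hF
  set A : E → Finset ι := fun x => Finset.univ.filter fun i => L i x = b i with hA
  have hS : ((fun x => (A x).card) '' F).Nonempty := hne.image _
  obtain ⟨x₀, hx₀F, hx₀c⟩ := Nat.sInf_mem hS
  have hmin : ∀ y ∈ F, (A x₀).card ≤ (A y).card := fun y hy => by
    exact hx₀c.trans_le (Nat.sInf_le ⟨y, hy, rfl⟩)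
  have hPmax : ∀ y ∈ P, f y ≤ f x₀ := hx₀F.2
  have hsub : ∀ y ∈ F, A x₀ ⊆ A y := by
    intro y hy
    set z : E := (1/2 : ℝ) • x₀ + (1/2 : ℝ) • y with hz
    have hzval : ∀ i, L i z = (1/2) * L i x₀ + (1/2) * L i y := by
      intro i; simp [hz, map_add, map_smul, smul_eq_mul]
    have hzP : z ∈ P := by
      intro i
      have h1 := hx₀F.1 i
      have h2 := hy.1 i
      have := hzval i
      linarith
    have hfy : f y = f x₀ := le_antisymm (hPmax y hy.1) (hy.2 x₀ hx₀F.1)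
    have hfz : f z = f x₀ := by
      simp [hz, map_add, map_smul, smul_eq_mul, hfy]; ring
    have hzF : z ∈ F := ⟨hzP, fun w hw => hfz ▸ hPmax w hw⟩
    have hAzx : A z ⊆ A x₀ := by
      intro i hi
      simp only [hA, Finset.mem_filter, Finset.mem_univ, true_and] at hi ⊢
      have h1 := hx₀F.1 i
      have h2 := hy.1 i
      have := hzval i
      linarith [hi, this]
    have hAzy : A z ⊆ A y := by
      intro i hi
      simp only [hA, Finset.mem_filter, Finset.mem_univ, true_and] at hi ⊢
      have h1 := hx₀F.1 i
      have h2 := hy.1 i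
      have := hzval i
      linarith [hi, this]
    have : A z = A x₀ := Finset.eq_of_subset_of_card_le hAzx (hmin z hzF)
    exact this ▸ hAzy
  refine ⟨A x₀, ?_⟩
  ext x
  constructor
  · rintro ⟨hxP, hxmax⟩
    refine ⟨hxP, fun i hi => ?_⟩
    have := hsub x ⟨hxP, hxmax⟩ hi
    simpa [hA] using (Finset.mem_filter.1 this).2
  · rintro ⟨hxP, hxeq⟩
    have hev : ∀ i, ∀ᶠ s in nhdsWithin (0:ℝ) (Set.Ioi 0),
        L i x₀ + s * (L i x₀ - L i x) ≤ b i := by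
      intro i
      by_cases hd : L i x₀ - L i x ≤ 0
      · filter_upwards [self_mem_nhdsWithin] with s hs
        have hs' : (0:ℝ) < s := hs
        have : s * (L i x₀ - L i x) ≤ 0 := mul_nonpos_of_nonneg_of_nonpos hs'.le hd
        have := hx₀F.1 i
        linarith
      · push_neg at hd
        have hlt : L i x₀ < b i := by
          rcases lt_or_eq_of_le (hx₀F.1 i) with h | h
          · exact h
          · exfalso
            have hiA : i ∈ A x₀ := by
              simp [hA, h]
            have := hxeq i hiA
            linarith
        have htend : Filter.Tendsto (fun s : ℝ => L i x₀ + s * (L i x₀ - L i x))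
            (nhdsWithin (0:ℝ) (Set.Ioi 0)) (nhds (L i x₀)) := by
          have : Filter.Tendsto (fun s : ℝ => L i x₀ + s * (L i x₀ - L i x))
              (nhds (0:ℝ)) (nhds (L i x₀ + 0 * (L i x₀ - L i x))) := by
            exact (tendsto_const_nhds.add (Filter.tendsto_id.mul tendsto_const_nhds))
          simpa using this.mono_left nhdsWithin_le_nhds
        exact htend.eventually_le_const hlt
    obtain ⟨s, hs, hs0⟩ := ((Filter.eventually_all.2 hev).and self_mem_nhdsWithin).exists
    have hs0' : (0:ℝ) < s := hs0
    set y : E := x₀ + s • (x₀ - x) with hy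
    have hyP : y ∈ P := by
      intro i
      have := hs i
      simpa [hy, map_add, map_smul, map_sub, smul_eq_mul, mul_sub] using this
    have hfy : f y = f x₀ + s * (f x₀ - f x) := by
      simp [hy, map_add, map_smul, map_sub, smul_eq_mul]
    have hle : f y ≤ f x₀ := hPmax y hyP
    have hcx : f x₀ ≤ f x := by nlinarith
    exact ⟨hxP, fun w hw => le_trans (hPmax w hw) hcx⟩

lemma active_exposed {E : Type*} [NormedAddCommGroup E] [NormedSpace ℝ E]
    [FiniteDimensional ℝ E] {ι : Type*} [Fintype ι]
    (L : ι → E →ₗ[ℝ] ℝ) (b : ι → ℝ) (I : Finset ι) :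
    IsExposed ℝ {x | ∀ i, L i x ≤ b i} {x ∈ {x | ∀ i, L i x ≤ b i} | ∀ i ∈ I, L i x = b i} := by
  intro hne
  obtain ⟨x₀, hx₀P, hx₀⟩ := hne
  refine ⟨LinearMap.toContinuousLinearMap (∑ i ∈ I, L i), ?_⟩
  have hval : ∀ x : E, (LinearMap.toContinuousLinearMap (∑ i ∈ I, L i)) x
      = ∑ i ∈ I, L i x := by
    intro x; simp [LinearMap.sum_apply]
  have hub : ∀ x ∈ {x : E | ∀ i, L i x ≤ b i},
      (LinearMap.toContinuousLinearMap (∑ i ∈ I, L i)) x ≤ ∑ i ∈ I, b i := by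
    intro x hx; rw [hval]; exact Finset.sum_le_sum fun i _ => hx i
  have hx₀v : (LinearMap.toContinuousLinearMap (∑ i ∈ I, L i)) x₀ = ∑ i ∈ I, b i := by
    rw [hval]; exact Finset.sum_congr rfl fun i hi => hx₀ i hi
  ext x
  simp only [mem_setOf_eq]
  constructor
  · rintro ⟨hxP, hxe⟩
    have hxv : (LinearMap.toContinuousLinearMap (∑ i ∈ I, L i)) x = ∑ i ∈ I, b i := by
      rw [hval]; exact Finset.sum_congr rfl fun i hi => hxe i hi
    exact ⟨hxP, fun y hy => by rw [hxv]; exact hub y hy⟩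
  · rintro ⟨hxP, hmax⟩
    refine ⟨hxP, ?_⟩
    have h1 : ∑ i ∈ I, b i ≤ (LinearMap.toContinuousLinearMap (∑ i ∈ I, L i)) x :=
      hx₀v ▸ hmax x₀ hx₀P
    have h2 : ∑ i ∈ I, L i x = ∑ i ∈ I, b i := by
      have := le_antisymm (hub x hxP) h1
      rwa [hval] at this
    exact fun i hi => (Finset.sum_eq_sum_iff_of_le fun i _ => hxP i).1 h2 i hi

lemma exposed_trans {E : Type*} [NormedAddCommGroup E] [NormedSpace ℝ E]
    [FiniteDimensional ℝ E] {P F F' : Set E} (hP : IsPolyhedron P)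
    (h1 : IsExposed ℝ P F) (h2 : IsExposed ℝ F F') (hne : F'.Nonempty) :
    IsExposed ℝ P F' := by
  classical
  obtain ⟨m, L, b, rfl⟩ := hP
  have hFne : F.Nonempty := hne.mono h2.subset
  obtain ⟨f, hf⟩ := h1 hFne
  obtain ⟨I, hI⟩ := face_eq_active L b f (hf ▸ hFne)
  have hFact : F = {x ∈ {x | ∀ i, L i x ≤ b i} | ∀ i ∈ I, L i x = b i} := hf.trans hI
  set L' : Fin m ⊕ Fin m → E →ₗ[ℝ] ℝ :=
    Sum.elim L (fun i => if i ∈ I then -L i else 0) with hL'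
  set b' : Fin m ⊕ Fin m → ℝ := Sum.elim b (fun i => if i ∈ I then -b i else 0) with hb'
  have hQ : F = {x | ∀ j, L' j x ≤ b' j} := by
    rw [hFact]; ext x
    simp only [mem_setOf_eq, mem_sep_iff]
    constructor
    · rintro ⟨hxP, hxe⟩ j
      cases j with
      | inl i => simpa [hL', hb'] using hxP i
      | inr i =>
        by_cases hi : i ∈ I
        · simp [hL', hb', hi, hxe i hi]
        · simp [hL', hb', hi]
    · intro h
      constructor
      · intro i; simpa [hL', hb'] using h (Sum.inl i)
      · intro i hi
        have h1 := h (Sum.inl i)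
        have h2 := h (Sum.inr i)
        simp only [hL', hb', Sum.elim_inl, Sum.elim_inr, hi, if_pos, LinearMap.neg_apply,
          neg_le_neg_iff] at h1 h2
        linarith
  obtain ⟨g, hg⟩ := h2 hne
  have hg' : F' = {x ∈ {x | ∀ j, L' j x ≤ b' j} |
      ∀ y ∈ {x | ∀ j, L' j x ≤ b' j}, g y ≤ g x} := by rw [← hQ]; exact hg
  obtain ⟨J, hJ⟩ := face_eq_active L' b' g (hg' ▸ hne)
  have hF'act : F' = {x ∈ {x | ∀ j, L' j x ≤ b' j} | ∀ j ∈ J, L' j x = b' j} := hg'.trans hJ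
  set K : Finset (Fin m) := I ∪ Finset.univ.filter (fun i => Sum.inl i ∈ J) with hK
  have hKey : F' = {x ∈ {x | ∀ i, L i x ≤ b i} | ∀ i ∈ K, L i x = b i} := by
    ext x
    constructor
    · intro hx
      rw [hF'act] at hx
      obtain ⟨hxQ, hxJ⟩ := hx
      have hxF : x ∈ F := hQ ▸ hxQ
      rw [hFact] at hxF
      refine ⟨hxF.1, fun i hi => ?_⟩
      rcases Finset.mem_union.1 hi with h | h
      · exact hxF.2 i h
      · have := hxJ (Sum.inl i) (Finset.mem_filter.1 h).2
        simpa [hL', hb'] using this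
    · rintro ⟨hxP, hxK⟩
      have hxF : x ∈ F := by
        rw [hFact]
        exact ⟨hxP, fun i hi => hxK i (Finset.mem_union_left _ hi)⟩
      rw [hF'act]
      refine ⟨hQ ▸ hxF, fun j hj => ?_⟩
      cases j with
      | inl i =>
        have hiK : i ∈ K := Finset.mem_union_right _ (Finset.mem_filter.2 ⟨Finset.mem_univ _, hj⟩)
        simpa [hL', hb'] using hxK i hiK
      | inr i =>
        by_cases hi : i ∈ I
        · have := hxK i (Finset.mem_union_left _ hi)
          simp [hL', hb', hi, this]
        · simp [hL', hb', hi]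
  rw [hKey]
  exact active_exposed L b K

/-- a face of an action set is an action set. -/
theorem stmt1 (n : ℕ) (negf : V n → ℝ)
    (hpoly : IsPolyhedron (epi negf)) (hconv : ConvexOn ℝ univ negf)
    (T T' : Set (V n)) (hT : ActionSet negf T)
    (hface : IsExposed ℝ T T') (hne : T'.Nonempty) :
    ActionSet negf T' := by
  obtain ⟨F, ⟨hFexp, hFne, hFnv⟩, hTF⟩ := hT
  obtain ⟨l, hl⟩ := hface hne
  set ψ : (V n × ℝ) →L[ℝ] ℝ := l.comp (ContinuousLinearMap.fst ℝ (V n) ℝ) with hψ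
  set F' : Set (V n × ℝ) := {p ∈ F | ∀ q ∈ F, ψ q ≤ ψ p} with hF'
  have h2 : IsExposed ℝ F F' := fun _ => ⟨ψ, rfl⟩
  have himg : Prod.fst '' F' = T' := by
    ext x
    constructor
    · rintro ⟨p, ⟨hpF, hpmax⟩, rfl⟩
      rw [hl]
      refine ⟨hTF ▸ ⟨p, hpF, rfl⟩, fun y hy => ?_⟩
      rw [hTF] at hy
      obtain ⟨q, hqF, rfl⟩ := hy
      exact hpmax q hqF
    · intro hx
      rw [hl] at hx
      obtain ⟨hxT, hxmax⟩ := hx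
      rw [hTF] at hxT
      obtain ⟨p, hpF, rfl⟩ := hxT
      exact ⟨p, ⟨hpF, fun q hq => hxmax q.1 (hTF ▸ ⟨q, hq, rfl⟩)⟩, rfl⟩
  have hF'ne : F'.Nonempty := by
    obtain ⟨x, hx⟩ := hne
    rw [← himg] at hx
    obtain ⟨p, hp, -⟩ := hx
    exact ⟨p, hp⟩
  refine ⟨F', ⟨exposed_trans hpoly hFexp h2 hF'ne, hF'ne, fun hmem => hFnv ?_⟩, himg.symm⟩
  exact AffineSubspace.direction_le (affineSpan_mono ℝ (sep_subset F _)) hmem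
end
end

section
/- Let F be a non-vertical face of the epigraph of a polyhedral convex function −f on ℝⁿ, and T its projection to ℝⁿ. Then the map t ↦ (t, −f(t)) is a bijection from T to F; in particular for each t ∈ T there is exactly one z with (t, z) ∈ F, namely z = −f(t). -/
noncomputable section
open Set

/-- `t ↦ (t, negf t)` is a bijection from the projection `T` of a
non-vertical face `F` of `epi negf` onto `F`; for each `t ∈ T` the unique `z`
with `(t, z) ∈ F` is `z = negf t`. -/
theorem stmt2 (n : ℕ) (negf : V n → ℝ)
    (hpoly : IsPolyhedron (epi negf)) (hconv : ConvexOn ℝ univ negf)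
    (F : Set (V n × ℝ)) (hF : NonVerticalFace (epi negf) F)
    (T : Set (V n)) (hT : T = Prod.fst '' F) :
    Set.BijOn (fun t => (t, negf t)) T F ∧
      ∀ t ∈ T, ∀ z : ℝ, (t, z) ∈ F → z = negf t := by
  obtain ⟨hexp, hne, hdir⟩ := hF
  obtain ⟨l, hl⟩ := hexp hne
  have hFsub : F ⊆ epi negf := by rw [hl]; exact fun x hx => hx.1
  have hneg : l ((0 : V n), (1 : ℝ)) < 0 := by
    by_contra h
    push_neg at h
    obtain ⟨⟨t, z⟩, htz⟩ := hne
    have hmem : ((t, z + 1) : V n × ℝ) ∈ epi negf := by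
      have := hFsub htz
      simp only [epi, mem_setOf_eq] at this ⊢
      linarith
    have heq : l ((t, z + 1) : V n × ℝ) = l (t, z) + l ((0 : V n), (1 : ℝ)) := by
      have h2 : ((t, z + 1) : V n × ℝ) = (t, z) + ((0 : V n), (1 : ℝ)) := by
        ext <;> simp
      rw [h2, map_add]
    have htz' := htz
    rw [hl] at htz'
    have hF2 : ((t, z + 1) : V n × ℝ) ∈ F := by
      rw [hl]
      refine ⟨hmem, fun y hy => ?_⟩
      calc l y ≤ l (t, z) := htz'.2 y hy
        _ ≤ l (t, z + 1) := by rw [heq]; linarith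
    apply hdir
    have hv := AffineSubspace.vsub_mem_direction
      (subset_affineSpan ℝ F hF2) (subset_affineSpan ℝ F htz)
    have : ((t, z + 1) : V n × ℝ) -ᵥ (t, z) = ((0 : V n), (1 : ℝ)) := by
      simp [Prod.ext_iff]
    rwa [this] at hv
  have huniq : ∀ t z, (t, z) ∈ F → z = negf t := by
    intro t z htz
    have hz : negf t ≤ z := hFsub htz
    rcases eq_or_lt_of_le hz with h | h
    · exact h.symm
    · exfalso
      have hmem : ((t, negf t) : V n × ℝ) ∈ epi negf := by simp [epi]
      rw [hl] at htz
      have hle := htz.2 _ hmem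
      have heq : l ((t, negf t) : V n × ℝ)
          = l (t, z) + (negf t - z) * l ((0 : V n), (1 : ℝ)) := by
        have h2 : ((t, negf t) : V n × ℝ) = (t, z) + (negf t - z) • ((0 : V n), (1 : ℝ)) := by
          ext <;> simp
        rw [h2, map_add, map_smul, smul_eq_mul]
      nlinarith [mul_pos (sub_pos.mpr h) (neg_pos.mpr hneg)]
  refine ⟨⟨?_, ?_, ?_⟩, fun t _ z hz => huniq t z hz⟩
  · intro t ht
    rw [hT] at ht
    obtain ⟨⟨t', z⟩, hmem, rfl⟩ := ht
    exact huniq _ _ hmem ▸ hmem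
  · intro a _ b _ h
    exact (Prod.ext_iff.mp h).1
  · intro p hp
    refine ⟨p.1, ?_, ?_⟩
    · rw [hT]; exact ⟨p, hp, rfl⟩
    · have h := huniq p.1 p.2 hp
      exact Prod.ext rfl h.symm
end
end

section
/- With notation as above (f, g conjugate polyhedral functions, W(t) the set of optimal w given t), for each t the set W(t) is the projection of a non-vertical face of epi(g); i.e., W(t) is a reaction set. Conversely, every projection W of a non-vertical face of epi(g) arises as W(t) for some t. -/
noncomputable section
open Set

/-- Epigraph of an `EReal`-valued function (as a subset of `ℝⁿ × ℝ`). -/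
def epiE {n : ℕ} (g : V n → EReal) : Set (V n × ℝ) := {p | g p.1 ≤ (p.2 : EReal)}

/-! On `epi g`, minimizing `⟪t, w⟫ + g w` is minimizing the linear functional
`objective t : (w, r) ↦ ⟪t, w⟫ + r`; hence `W(t)` is the projection of the face of `epi g`
exposed by `-objective t`, which is non-vertical since `objective t (0, 1) = 1`.
Conversely, a functional `l` exposing a nonempty face of the upward-closed set `epi g` has
`l (0, 1) ≤ 0`, and `l (0, 1) ≠ 0` exactly when the face is non-vertical; rescaling, `l` is a
positive multiple of some `-objective t`, which exposes the same face. -/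

section ExposedFaces

variable {E : Type*} [AddCommGroup E] [Module ℝ E] [TopologicalSpace E]

lemma ContinuousLinearMap.mem_toExposed {l : StrongDual ℝ E} {A : Set E} {x : E} :
    x ∈ l.toExposed A ↔ x ∈ A ∧ ∀ y ∈ A, l y ≤ l x :=
  Iff.rfl

lemma ContinuousLinearMap.toExposed_smul_of_pos (l : StrongDual ℝ E) {c : ℝ} (hc : 0 < c)
    (A : Set E) : (c • l).toExposed A = l.toExposed A := by
  ext x
  simp only [ContinuousLinearMap.mem_toExposed, smul_apply, smul_eq_mul,
    mul_le_mul_iff_right₀ hc]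

lemma ContinuousLinearMap.apply_eq_of_mem_toExposed {l : StrongDual ℝ E} {A : Set E} {x y : E}
    (hx : x ∈ l.toExposed A) (hy : y ∈ l.toExposed A) : l x = l y :=
  le_antisymm (hy.2 x hx.1) (hx.2 y hy.1)

lemma ContinuousLinearMap.direction_affineSpan_toExposed_le_ker (l : StrongDual ℝ E)
    (A : Set E) : (affineSpan ℝ (l.toExposed A)).direction ≤ LinearMap.ker (l : E →ₗ[ℝ] ℝ) := by
  rw [direction_affineSpan, vectorSpan_def, Submodule.span_le]
  rintro _ ⟨x, hx, y, hy, rfl⟩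
  simp [l.apply_eq_of_mem_toExposed hx hy]

end ExposedFaces

variable {n : ℕ}

def objective (t : V n) : StrongDual ℝ (V n × ℝ) :=
  (innerSL ℝ t).comp (ContinuousLinearMap.fst ℝ _ _) + ContinuousLinearMap.snd ℝ _ _

@[simp]
lemma objective_apply (t : V n) (p : V n × ℝ) : objective t p = inner ℝ t p.1 + p.2 := by
  simp [objective]

lemma mem_toExposed_neg_objective {A : Set (V n × ℝ)} {t : V n} {p : V n × ℝ} :
    p ∈ (-objective t).toExposed A ↔ p ∈ A ∧ ∀ y ∈ A, objective t p ≤ objective t y := by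
  simp only [ContinuousLinearMap.mem_toExposed, neg_apply, neg_le_neg_iff]

lemma nonVerticalFace_toExposed_neg_objective {A : Set (V n × ℝ)} {t : V n}
    (hne : ((-objective t).toExposed A).Nonempty) :
    NonVerticalFace A ((-objective t).toExposed A) := by
  refine ⟨ContinuousLinearMap.toExposed.isExposed, hne, fun hv => ?_⟩
  simpa using (-objective t).direction_affineSpan_toExposed_le_ker A hv

lemma exists_eq_smul_objective (l : StrongDual ℝ (V n × ℝ)) (hl : l (0, 1) ≠ 0) :
    ∃ t : V n, l = l (0, 1) • objective t := by
  refine ⟨(l (0, 1))⁻¹ • (InnerProductSpace.toDual ℝ (V n)).symm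
    (l.comp (ContinuousLinearMap.inl ℝ (V n) ℝ)), ?_⟩
  refine ContinuousLinearMap.ext fun p => ?_
  have hsplit : p = (p.1, 0) + p.2 • ((0 : V n), (1 : ℝ)) := by ext <;> simp
  conv_lhs => rw [hsplit, map_add, map_smul]
  simp [real_inner_smul_left, InnerProductSpace.toDual_symm_apply]
  field_simp

lemma exists_eq_toExposed_neg_objective {A : Set (V n × ℝ)} (hup : ∀ p ∈ A, (p.1, p.2 + 1) ∈ A)
    {F : Set (V n × ℝ)} (hF : NonVerticalFace A F) : ∃ t : V n, F = (-objective t).toExposed A := by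
  obtain ⟨hexp, ⟨x, hx⟩, hnv⟩ := hF
  obtain ⟨l, hl⟩ := hexp ⟨x, hx⟩
  change F = l.toExposed A at hl
  subst hl
  have hshift : ∀ p : V n × ℝ, l (p.1, p.2 + 1) = l p + l (0, 1) := fun p => by
    rw [← map_add]
    congr 1
    ext <;> simp
  obtain ⟨hxA, hxmax⟩ := l.mem_toExposed.mp hx
  have hle : l (0, 1) ≤ 0 := by linarith [hxmax _ (hup x hxA), hshift x]
  have hne : l (0, 1) ≠ 0 := by
    intro h0
    have hx' : (x.1, x.2 + 1) ∈ l.toExposed A := l.mem_toExposed.mpr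
      ⟨hup x hxA, fun y hy => by rw [hshift, h0, add_zero]; exact hxmax y hy⟩
    apply hnv
    convert AffineSubspace.vsub_mem_direction (mem_affineSpan ℝ hx') (mem_affineSpan ℝ hx) using 1
    ext <;> simp [vsub_eq_sub]
  obtain ⟨t, ht⟩ := exists_eq_smul_objective l hne
  refine ⟨t, ?_⟩
  rw [ht, ← neg_smul_neg (l (0, 1)) (objective t),
    ContinuousLinearMap.toExposed_smul_of_pos _ (neg_pos.mpr (hle.lt_of_ne hne))]

section Epigraph

variable {g : V n → EReal}

lemma mk_mem_epiE {p : V n × ℝ} (hp : p ∈ epiE g) {r : ℝ} (hr : p.2 ≤ r) : (p.1, r) ∈ epiE g :=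
  hp.trans (EReal.coe_le_coe_iff.mpr hr)

lemma mk_toReal_mem_epiE {w : V n} (hbot : g w ≠ ⊥) (htop : g w ≠ ⊤) :
    (w, (g w).toReal) ∈ epiE g :=
  (EReal.coe_toReal htop hbot).ge

lemma coe_objective_mk_toReal (t : V n) {w : V n} (hbot : g w ≠ ⊥) (htop : g w ≠ ⊤) :
    (objective t (w, (g w).toReal) : EReal) = (inner ℝ t w : ℝ) + g w := by
  rw [objective_apply, EReal.coe_add, EReal.coe_toReal htop hbot]

lemma inner_add_le_objective (t : V n) {p : V n × ℝ} (hp : p ∈ epiE g) :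
    (inner ℝ t p.1 : ℝ) + g p.1 ≤ (objective t p : EReal) := by
  rw [objective_apply, EReal.coe_add]
  exact add_le_add_right hp _

lemma fst_image_toExposed_neg_objective (hbot : ∀ w, g w ≠ ⊥) (hproper : ∃ w, g w ≠ ⊤)
    (t : V n) : Prod.fst '' (-objective t).toExposed (epiE g) =
      {w | ⨅ v, ((inner ℝ t v : ℝ) : EReal) + g v = ((inner ℝ t w : ℝ) : EReal) + g w} := by
  ext w
  constructor
  · rintro ⟨p, hp, rfl⟩
    rw [mem_toExposed_neg_objective] at hp
    refine le_antisymm (iInf_le _ _) (le_iInf fun v => ?_)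
    by_cases hv : g v = ⊤
    · simp [hv]
    calc _ ≤ (objective t p : EReal) := inner_add_le_objective t hp.1
      _ ≤ objective t (v, (g v).toReal) :=
        EReal.coe_le_coe_iff.mpr (hp.2 _ (mk_toReal_mem_epiE (hbot v) hv))
      _ = _ := coe_objective_mk_toReal t (hbot v) hv
  · intro hw
    rw [mem_ofPred_eq] at hw
    have htop : g w ≠ ⊤ := by
      obtain ⟨v, hv⟩ := hproper
      intro h
      rw [h, EReal.coe_add_top, eq_top_iff] at hw
      have := (hw.trans (iInf_le _ v)).antisymm le_top
      rw [← coe_objective_mk_toReal t (hbot v) hv] at this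
      exact EReal.coe_ne_top _ this.symm
    refine ⟨(w, (g w).toReal), mem_toExposed_neg_objective.mpr
      ⟨mk_toReal_mem_epiE (hbot w) htop, fun y hy => ?_⟩, rfl⟩
    rw [← EReal.coe_le_coe_iff, coe_objective_mk_toReal t (hbot w) htop, ← hw]
    exact (iInf_le _ y.1).trans (inner_add_le_objective t hy)

end Epigraph

theorem stmt4_general (n : ℕ) (g : V n → EReal)
    (hbot : ∀ w, g w ≠ ⊥) (hproper : ∃ w, g w ≠ ⊤)
    (f : V n → EReal)
    (hf : ∀ t, f t = ⨅ w : V n, ((inner ℝ t w : ℝ) : EReal) + g w)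
    (hatt : ∀ t, ∃ w : V n, f t = ((inner ℝ t w : ℝ) : EReal) + g w)
    (Wt : V n → Set (V n))
    (hW : ∀ t, Wt t = {w | f t = ((inner ℝ t w : ℝ) : EReal) + g w}) :
    (∀ t : V n, ∃ F : Set (V n × ℝ),
        NonVerticalFace (epiE g) F ∧ Wt t = Prod.fst '' F) ∧
    (∀ W' : Set (V n),
        (∃ F : Set (V n × ℝ), NonVerticalFace (epiE g) F ∧ W' = Prod.fst '' F) →
        ∃ t : V n, W' = Wt t) := by
  have hWt : ∀ t, Wt t = Prod.fst '' (-objective t).toExposed (epiE g) := fun t => by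
    rw [hW, fst_image_toExposed_neg_objective hbot hproper, hf]
  refine ⟨fun t => ⟨_, nonVerticalFace_toExposed_neg_objective ?_, hWt t⟩, ?_⟩
  · obtain ⟨w, hw⟩ := hatt t
    have hwt : w ∈ Wt t := by rw [hW]; exact hw
    rw [hWt] at hwt
    exact image_nonempty.mp ⟨w, hwt⟩
  · rintro W' ⟨F, hF, rfl⟩
    obtain ⟨t, rfl⟩ := exists_eq_toExposed_neg_objective
      (fun p hp => mk_mem_epiE hp (le_add_of_nonneg_right zero_le_one)) hF
    exact ⟨t, (hWt t).symm⟩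

/-- for every `t`, the argmin set `W(t)` is a reaction set
(the projection of a non-vertical face of `epi g`), and conversely every
reaction set arises as `W(t)` for some `t`. -/
theorem stmt4 (n : ℕ) (g : V n → EReal)
    (hbot : ∀ w, g w ≠ ⊥) (hproper : ∃ w, g w ≠ ⊤)
    (hpoly : IsPolyhedron (epiE g))
    (f : V n → EReal)
    (hf : ∀ t, f t = ⨅ w : V n, ((inner ℝ t w : ℝ) : EReal) + g w)
    (hatt : ∀ t, ∃ w : V n, f t = ((inner ℝ t w : ℝ) : EReal) + g w)
    (Wt : V n → Set (V n))
    (hW : ∀ t, Wt t = {w | f t = ((inner ℝ t w : ℝ) : EReal) + g w}) :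
    (∀ t : V n, ∃ F : Set (V n × ℝ),
        NonVerticalFace (epiE g) F ∧ Wt t = Prod.fst '' F) ∧
    (∀ W' : Set (V n),
        (∃ F : Set (V n × ℝ), NonVerticalFace (epiE g) F ∧ W' = Prod.fst '' F) →
        ∃ t : V n, W' = Wt t) :=
  stmt4_general n g hbot hproper f hf hatt Wt hW
end
end

section
/- Let T be an action set (projection of a non-vertical face of epi(−f)) and define W(T) = ⋂_{t ∈ T} W(t). Then W(T) is nonempty and is a reaction set (the projection of a non-vertical face of epi(g)). -/
noncomputable section
open Set

/-!
For `t ∈ T` the functional `(w, r) ↦ -(⟪t, w⟫ + r)` exposes a face of `epi g` that lies in the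
graph of `g` and projects onto `W(t)`; so `W(T)` is the projection of the intersection `F` of
these faces, and `(w₀, g w₀)` lies in `F` when `T = T(w₀)`. A nonempty face of a polyhedron is
cut out by the constraints active on it, so a polyhedron has only finitely many exposed faces and
`F` is a finite intersection of exposed faces with a common point, hence exposed. Each of the
functionals is constant on `F` but not along `(0, 1)`, so `F` is non-vertical.
-/

open Filter Topology

section Polyhedron

variable {E ι : Type*} [AddCommGroup E] [Module ℝ E] [Finite ι]
  {L : ι → E →ₗ[ℝ] ℝ} {b : ι → ℝ}

omit [Finite ι] in
theorem convex_setOf_forall_le : Convex ℝ {x | ∀ i, L i x ≤ b i} := by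
  rw [ofPred_forall]
  exact convex_iInter fun i => convex_halfSpace_le (L i).isLinear (b i)

theorem exists_mem_forall_eq_or_lt {F : Set E} (hFc : Convex ℝ F) (hFne : F.Nonempty)
    (hFle : ∀ x ∈ F, ∀ i, L i x ≤ b i) :
    ∃ x ∈ F, ∀ i, (∀ y ∈ F, L i y = b i) ∨ L i x < b i := by
  classical
  have := Fintype.ofFinite ι
  suffices ∀ s : Finset ι, ∃ x ∈ F, ∀ i ∈ s, (∀ y ∈ F, L i y = b i) ∨ L i x < b i by
    simpa using this Finset.univ
  intro s
  induction s using Finset.induction_on with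
  | empty => exact ⟨hFne.some, hFne.some_mem, by simp⟩
  | insert j s _ ih =>
    obtain ⟨x, hxF, hx⟩ := ih
    by_cases hj : ∀ y ∈ F, L j y = b j
    · exact ⟨x, hxF, Finset.forall_mem_insert _ _ _ |>.2 ⟨Or.inl hj, hx⟩⟩
    push Not at hj
    obtain ⟨z, hzF, hzj⟩ := hj
    have hz : L j z < b j := (hFle z hzF j).lt_of_ne hzj
    have hmid : ∀ i, L i ((1 / 2 : ℝ) • x + (1 / 2 : ℝ) • z) = (L i x + L i z) / 2 := by
      intro i; simp only [map_add, map_smul, smul_eq_mul]; ring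
    refine ⟨_, hFc hxF hzF one_half_pos.le one_half_pos.le (add_halves 1),
      Finset.forall_mem_insert _ _ _ |>.2 ⟨Or.inr ?_, fun i hi => ?_⟩⟩
    · linarith [hmid j, hFle x hxF j]
    · exact (hx i hi).imp_right fun h => by linarith [hmid i, hFle z hzF i]

theorem exists_pos_forall_add_smul_le {x d : E} (hx : ∀ i, L i x ≤ b i)
    (hd : ∀ i, L i x = b i → L i d = 0) : ∃ ε : ℝ, 0 < ε ∧ ∀ i, L i (x + ε • d) ≤ b i := by
  have hlin : ∀ i (ε : ℝ), L i (x + ε • d) = L i x + ε * L i d := by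
    intro i ε; simp only [map_add, map_smul, smul_eq_mul]
  have hev : ∀ i, ∀ᶠ ε in 𝓝 (0 : ℝ), L i (x + ε • d) ≤ b i := by
    intro i
    simp only [hlin]
    rcases (hx i).lt_or_eq with hlt | heq
    · exact Tendsto.eventually_le_const hlt <|
        (by fun_prop : Continuous fun ε : ℝ => L i x + ε * L i d).tendsto' 0 _ (by simp)
    · exact Eventually.of_forall fun ε => by simp [heq, hd i heq]
  obtain ⟨ε, hε, hpos⟩ := ((eventually_all.2 hev).filter_mono nhdsWithin_le_nhds).and
    self_mem_nhdsWithin |>.exists (f := 𝓝[>] (0 : ℝ))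
  exact ⟨ε, hpos, hε⟩

/-- Take `x ∈ F` strictly inside every constraint not active on all of `F`; then `x` can be pushed
a little away from `y` inside the polyhedron, so `x` lies in an open segment starting at `y`. -/
theorem IsExtreme.mem_of_forall_eq {F : Set E} (hF : IsExtreme ℝ {x | ∀ i, L i x ≤ b i} F)
    (hFc : Convex ℝ F) (hFne : F.Nonempty) {y : E} (hy : ∀ i, L i y ≤ b i)
    (hact : ∀ i, (∀ x ∈ F, L i x = b i) → L i y = b i) : y ∈ F := by
  obtain ⟨x, hxF, hx⟩ := exists_mem_forall_eq_or_lt hFc hFne fun x hx => hF.subset hx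
  obtain ⟨ε, hε, hz⟩ := exists_pos_forall_add_smul_le (d := x - y) (hF.subset hxF) fun i hi => by
    rcases hx i with h | h
    · simp [h x hxF, hact i h]
    · exact absurd hi h.ne
  refine hF.left_mem_of_mem_openSegment hy hz hxF
    ⟨ε / (1 + ε), 1 / (1 + ε), by positivity, by positivity, by field_simp; ring, ?_⟩
  match_scalars <;> field_simp; ring

end Polyhedron

section Exposed

variable {E : Type*} [AddCommGroup E] [Module ℝ E] [TopologicalSpace E] {P : Set E}

theorem IsPolyhedron.finite_setOf_isExposed (hP : IsPolyhedron P) :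
    {F | IsExposed ℝ P F}.Finite := by
  obtain ⟨m, L, b, rfl⟩ := hP
  refine ((finite_range fun I : Set (Fin m) =>
    {x | (∀ i, L i x ≤ b i) ∧ ∀ i ∈ I, L i x = b i}).insert ∅).subset fun F hF => ?_
  rcases F.eq_empty_or_nonempty with rfl | hne
  · exact mem_insert _ _
  refine mem_insert_of_mem _ ⟨{i | ∀ x ∈ F, L i x = b i}, Subset.antisymm ?_ ?_⟩
  · exact fun y ⟨hy, hact⟩ => hF.isExtreme.mem_of_forall_eq (hF.convex convex_setOf_forall_le)
      hne hy hact
  · exact fun y hy => ⟨hF.subset hy, fun i hi => hi y hy⟩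

theorem IsPolyhedron.isExposed_biInter (hP : IsPolyhedron P) {ι : Type*} {s : Set ι}
    (hs : s.Nonempty) {F : ι → Set E} (hF : ∀ i ∈ s, IsExposed ℝ P (F i)) :
    IsExposed ℝ P (⋂ i ∈ s, F i) := by
  have hfin : (F '' s).Finite :=
    hP.finite_setOf_isExposed.subset <| image_subset_iff.2 hF
  rw [← sInter_image, ← hfin.coe_toFinset]
  exact IsExposed.sInter (by simpa using hs) (by simpa using hF)

theorem ContinuousLinearMap.eq_of_mem_toExposed {l : StrongDual ℝ E} {x y : E}
    (hx : x ∈ l.toExposed P) (hy : y ∈ l.toExposed P) : l x = l y :=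
  le_antisymm (hy.2 x hx.1) (hx.2 y hy.1)

end Exposed

theorem direction_affineSpan_le_ker {k E M : Type*} [Ring k] [AddCommGroup E] [Module k E]
    [AddCommGroup M] [Module k M] {s : Set E} {l : E →ₗ[k] M}
    (hs : ∀ x ∈ s, ∀ y ∈ s, l x = l y) : (affineSpan k s).direction ≤ LinearMap.ker l := by
  rw [direction_affineSpan, vectorSpan_def, Submodule.span_le]
  rintro _ ⟨x, hx, y, hy, rfl⟩
  simp [hs x hx y hy]

theorem EReal.coe_le_coe_add_of_forall_le {a c : ℝ} {x : EReal}
    (h : ∀ z : ℝ, x ≤ z → c ≤ a + z) : (c : EReal) ≤ a + x := by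
  have : ((c - a : ℝ) : EReal) ≤ x :=
    EReal.le_of_forall_lt_iff_le.1 fun z hz => EReal.coe_le_coe_iff.2 (by linarith [h z hz.le])
  calc (c : EReal) = a + (c - a : ℝ) := by rw [← EReal.coe_add, add_sub_cancel]
    _ ≤ a + x := by gcongr

section Epigraph

variable {n : ℕ}

def negInnerAdd (t : V n) : StrongDual ℝ (V n × ℝ) :=
  -((innerSL ℝ t).comp (ContinuousLinearMap.fst ℝ (V n) ℝ) + ContinuousLinearMap.snd ℝ (V n) ℝ)

@[simp]
theorem negInnerAdd_apply (t : V n) (p : V n × ℝ) :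
    negInnerAdd t p = -(inner ℝ t p.1 + p.2) := rfl

theorem mem_toExposed_negInnerAdd_iff {g : V n → EReal} {t : V n} {p : V n × ℝ} :
    p ∈ (negInnerAdd t).toExposed (epiE g) ↔ g p.1 = p.2 ∧
      ⨅ w, ((inner ℝ t w : ℝ) : EReal) + g w = ((inner ℝ t p.1 : ℝ) : EReal) + g p.1 := by
  obtain ⟨w, r⟩ := p
  simp only [ContinuousLinearMap.toExposed, epiE, mem_ofPred_eq, negInnerAdd_apply, Prod.forall,
    neg_le_neg_iff]
  constructor
  · rintro ⟨hwr, hmin⟩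
    have hle : ∀ v, ((inner ℝ t w + r : ℝ) : EReal) ≤ ((inner ℝ t v : ℝ) : EReal) + g v :=
      fun v => EReal.coe_le_coe_add_of_forall_le (hmin v)
    have hrw : g w = r := by
      refine le_antisymm hwr ((EReal.addLECancellable_coe (inner ℝ t w)).add_le_add_iff_left.1 ?_)
      simpa only [EReal.coe_add] using hle w
    refine ⟨hrw, le_antisymm (iInf_le _ w) ?_⟩
    rw [hrw, ← EReal.coe_add]
    exact le_iInf hle
  · rintro ⟨hrw, hinf⟩
    refine ⟨hrw.le, fun v s hvs => ?_⟩
    have : ((inner ℝ t w + r : ℝ) : EReal) ≤ ((inner ℝ t v + s : ℝ) : EReal) := by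
      rw [EReal.coe_add, EReal.coe_add, ← hrw, ← hinf]
      exact (iInf_le _ v).trans (by gcongr)
    exact_mod_cast this

end Epigraph

theorem stmt5_general (n : ℕ) (g : V n → EReal)
    (hbot : ∀ w, g w ≠ ⊥) (hproper : ∃ w, g w ≠ ⊤)
    (hpoly : IsPolyhedron (epiE g))
    (f : V n → EReal)
    (hf : ∀ t, f t = ⨅ w : V n, ((inner ℝ t w : ℝ) : EReal) + g w)
    (Wt : V n → Set (V n))
    (hW : ∀ t, Wt t = {w | f t = ((inner ℝ t w : ℝ) : EReal) + g w})
    (Tw : V n → Set (V n))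
    (hT : ∀ w, Tw w = {t | f t = ((inner ℝ t w : ℝ) : EReal) + g w})
    (T : Set (V n)) (hact : ∃ w : V n, T = Tw w) (hTne : T.Nonempty) :
    (⋂ t ∈ T, Wt t).Nonempty ∧
      ∃ F : Set (V n × ℝ), NonVerticalFace (epiE g) F ∧
        (⋂ t ∈ T, Wt t) = Prod.fst '' F := by
  obtain ⟨w₀, rfl⟩ := hact
  obtain ⟨t₁, ht₁⟩ := hTne
  have hf_ne_top : f t₁ ≠ ⊤ := by
    obtain ⟨w, hw⟩ := hproper
    exact ((hf t₁ ▸ iInf_le _ w).trans_lt (EReal.add_lt_top (EReal.coe_ne_top _) hw)).ne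
  set F := ⋂ t ∈ Tw w₀, (negInnerAdd t).toExposed (epiE g)
  have hF : F = {p | g p.1 = p.2 ∧ p.1 ∈ ⋂ t ∈ Tw w₀, Wt t} := by
    ext p
    simp only [F, mem_iInter₂, mem_toExposed_negInnerAdd_iff, ← hf, hW, mem_ofPred_eq]
    exact ⟨fun h => ⟨(h t₁ ht₁).1, fun t ht => (h t ht).2⟩, fun h t ht => ⟨h.1, h.2 t ht⟩⟩
  have hproj : ⋂ t ∈ Tw w₀, Wt t = Prod.fst '' F := by
    ext w
    refine ⟨fun hw => ?_, fun ⟨p, hp, hpw⟩ => hpw ▸ (hF ▸ hp).2⟩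
    have hgw : g w ≠ ⊤ := by
      have := (hW t₁ ▸ mem_iInter₂.1 hw t₁ ht₁ : f t₁ = _)
      exact fun h => hf_ne_top (by simp [this, h])
    exact ⟨(w, (g w).toReal), hF ▸ ⟨(EReal.coe_toReal hgw (hbot w)).symm, hw⟩, rfl⟩
  have hne : (⋂ t ∈ Tw w₀, Wt t).Nonempty := ⟨w₀, mem_iInter₂.2 fun t ht => by
    rw [hT] at ht
    rwa [hW]⟩
  refine ⟨hne, F, ⟨?_, image_nonempty.1 (hproj ▸ hne), fun hvert => ?_⟩, hproj⟩
  · exact hpoly.isExposed_biInter ⟨t₁, ht₁⟩ fun t _ => ContinuousLinearMap.toExposed.isExposed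
  · have := direction_affineSpan_le_ker (l := (negInnerAdd t₁ : V n × ℝ →ₗ[ℝ] ℝ))
      (fun x hx y hy => ContinuousLinearMap.eq_of_mem_toExposed
        (mem_iInter₂.1 hx t₁ ht₁) (mem_iInter₂.1 hy t₁ ht₁)) hvert
    simp at this

/-- if `T` is an action set (i.e. `T = T(w)` for some `w`),
then `W(T) := ⋂_{t ∈ T} W(t)` is nonempty and is a reaction set. -/
theorem stmt5 (n : ℕ) (g : V n → EReal)
    (hbot : ∀ w, g w ≠ ⊥) (hproper : ∃ w, g w ≠ ⊤)
    (hpoly : IsPolyhedron (epiE g))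
    (f : V n → EReal)
    (hf : ∀ t, f t = ⨅ w : V n, ((inner ℝ t w : ℝ) : EReal) + g w)
    (hatt : ∀ t, ∃ w : V n, f t = ((inner ℝ t w : ℝ) : EReal) + g w)
    (Wt : V n → Set (V n))
    (hW : ∀ t, Wt t = {w | f t = ((inner ℝ t w : ℝ) : EReal) + g w})
    (Tw : V n → Set (V n))
    (hT : ∀ w, Tw w = {t | f t = ((inner ℝ t w : ℝ) : EReal) + g w})
    (T : Set (V n)) (hact : ∃ w : V n, T = Tw w) (hTne : T.Nonempty) :
    (⋂ t ∈ T, Wt t).Nonempty ∧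
      ∃ F : Set (V n × ℝ), NonVerticalFace (epiE g) F ∧
        (⋂ t ∈ T, Wt t) = Prod.fst '' F :=
  stmt5_general n g hbot hproper hpoly f hf Wt hW Tw hT T hact hTne
end
end

section
/- A point w ≥ 0 satisfies that {w} is a reaction set (i.e., w is strongly bilevel feasible) if and only if (w, g(w)) is an extreme point of epi(g), if and only if dim T(w) = n. -/
noncomputable section
open Set

/-!
Write `x = (w, g w)` and `tilt t (v, s) = ⟪t, v⟫ + s`, so that `t ∈ T(w)` iff `tilt t` attains its
minimum over `epi g` at `x`.

If `x` is a vertex of the polyhedron `epi g`, it is a sharp minimizer of a linear functional `M`: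
`ε ‖z - x‖ ≤ M z - M x` on `epi g`. Hence `{x}` is an exposed face, clearly non-vertical; and
normalizing `M` to `c • tilt t₀`, sharpness survives perturbing `t₀` by less than `ε / c`, so a
ball lies in `T(w)` and `dim T(w) = n`. Conversely, if `T(w)` spans `ℝⁿ`, every `tilt t` with
`t ∈ T(w)` is constant on a segment of `epi g` through `x`, which forces the segment to be
vertical, hence trivial since `x` lies on the graph. Finally, a non-vertical face projecting onto
`{w}` is a single point, an extreme point of `epi g` lying over `w`, i.e. `x`.
-/

open Filter Topology

section Segment

variable {E : Type*} [AddCommGroup E] [Module ℝ E]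

lemma map_eq_of_mem_openSegment_of_le {F : Type*} [FunLike F E ℝ] [LinearMapClass F ℝ E ℝ]
    (ℓ : F) {p q x : E} (hx : x ∈ openSegment ℝ p q) (hp : ℓ x ≤ ℓ p) (hq : ℓ x ≤ ℓ q) :
    ℓ p = ℓ x := by
  obtain ⟨a, b, ha, hb, hab, rfl⟩ := hx
  obtain rfl : a = 1 - b := by linarith
  simp only [map_add, map_smul, smul_eq_mul] at hp hq ⊢
  nlinarith

lemma eq_zero_of_mem_extremePoints_of_eventually_add_smul_mem {A : Set E} {x d : E}
    (hx : x ∈ A.extremePoints ℝ) (hd : ∀ᶠ s : ℝ in 𝓝 0, x + s • d ∈ A) : d = 0 := by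
  have hneg : Tendsto (fun s : ℝ => -s) (𝓝 0) (𝓝 0) := by
    simpa using (continuous_neg.tendsto (0 : ℝ))
  have hpm : ∀ᶠ s : ℝ in 𝓝[>] 0, x + s • d ∈ A ∧ x + (-s) • d ∈ A :=
    nhdsWithin_le_nhds (hd.and (hneg.eventually hd))
  obtain ⟨s, ⟨hplus, hminus⟩, hs⟩ := (hpm.and self_mem_nhdsWithin).exists
  have hmid : x ∈ openSegment ℝ (x + s • d) (x + (-s) • d) :=
    ⟨1 / 2, 1 / 2, by norm_num, by norm_num, by norm_num, by module⟩
  have hsd : s • d = 0 := by simpa using hx.2 hplus hminus hmid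
  exact (smul_eq_zero.1 hsd).resolve_left (ne_of_gt hs)

end Segment

section Polyhedron

variable {E : Type*} [NormedAddCommGroup E] [NormedSpace ℝ E] [FiniteDimensional ℝ E]
  {ι : Type*} [Finite ι] (L : ι → E →ₗ[ℝ] ℝ) (b : ι → ℝ)

lemma eventually_add_smul_mem_of_forall_eq {x d : E} (hx : ∀ i, L i x ≤ b i)
    (hd : ∀ i, L i x = b i → L i d = 0) :
    ∀ᶠ s : ℝ in 𝓝 0, x + s • d ∈ {z | ∀ i, L i z ≤ b i} := by
  have hslack : ∀ᶠ y in 𝓝 x, ∀ i, L i x < b i → L i y < b i :=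
    eventually_all.2 fun i => eventually_imp_distrib_left.2 fun h =>
      (L i).continuous_of_finiteDimensional.continuousAt.eventually_lt continuousAt_const h
  have hlim : Tendsto (fun s : ℝ => x + s • d) (𝓝 0) (𝓝 x) :=
    Continuous.tendsto' (by fun_prop) 0 x (by simp)
  filter_upwards [hlim.eventually hslack] with s hs i
  rcases (hx i).lt_or_eq with hlt | heq
  · exact (hs i hlt).le
  · simp [hd i heq, heq]

theorem exists_sharp_min_of_mem_extremePoints {x : E}
    (hx : x ∈ {z | ∀ i, L i z ≤ b i}.extremePoints ℝ) :
    ∃ M : E →L[ℝ] ℝ, ∃ ε > 0, ∀ z ∈ {z | ∀ i, L i z ≤ b i}, ε * ‖z - x‖ ≤ M z - M x := by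
  classical
  have := Fintype.ofFinite ι
  -- `M` is minus the sum of the constraints tight at `x`, nonnegative on the tangent cone `C`;
  -- a nonzero `d ∈ C` with `M d = 0` would be a direction of a segment through `x` inside the
  -- polyhedron, and compactness of `C ∩ sphere 0 1` turns `M > 0` there into a uniform `ε`.
  set I := Finset.univ.filter fun i => L i x = b i
  set C := {d : E | ∀ i ∈ I, L i d ≤ 0}
  set M : E →L[ℝ] ℝ := LinearMap.toContinuousLinearMap (-∑ i ∈ I, L i)
  have hM : ∀ d, M d = ∑ i ∈ I, -L i d := by simp [M]
  have hM_pos : ∀ d ∈ C, d ≠ 0 → 0 < M d := by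
    intro d hd hd0
    have hnonneg : ∀ i ∈ I, 0 ≤ -L i d := fun i hi => neg_nonneg.2 (hd i hi)
    rw [hM]
    refine (Finset.sum_nonneg hnonneg).lt_of_ne fun h => hd0 ?_
    refine eq_zero_of_mem_extremePoints_of_eventually_add_smul_mem hx
      (eventually_add_smul_mem_of_forall_eq L b hx.1 fun i hi => ?_)
    simpa using (Finset.sum_eq_zero_iff_of_nonneg hnonneg).1 h.symm i (by simp [I, hi])
  have hC : IsClosed C := by
    simp only [C, ofPred_forall]
    exact isClosed_biInter fun i _ =>
      isClosed_le (L i).continuous_of_finiteDimensional continuous_const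
  obtain ⟨ε, hε, hεM⟩ := ((isCompact_sphere (0 : E) 1).inter_left hC).exists_forall_le'
    M.continuous.continuousOn fun d hd => hM_pos d hd.1 (ne_zero_of_mem_unit_sphere ⟨d, hd.2⟩)
  refine ⟨M, ε, hε, fun z hz => ?_⟩
  have hzC : z - x ∈ C := fun i hi => by
    simpa [(Finset.mem_filter.1 hi).2] using hz i
  rcases eq_or_ne (z - x) 0 with h0 | h0
  · simp [h0, ← map_sub]
  have hnorm : 0 < ‖z - x‖ := norm_pos_iff.2 h0
  have hunit : ‖z - x‖⁻¹ • (z - x) ∈ C ∩ Metric.sphere 0 1 := by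
    refine ⟨fun i hi => ?_, by simp [norm_smul, hnorm.ne']⟩
    simpa using mul_nonpos_of_nonneg_of_nonpos (inv_nonneg.2 hnorm.le) (hzC i hi)
  have := hεM _ hunit
  rw [map_smul, smul_eq_mul] at this
  rw [← map_sub]
  calc ε * ‖z - x‖ ≤ (‖z - x‖⁻¹ * M (z - x)) * ‖z - x‖ := by gcongr
    _ = M (z - x) := by field_simp

end Polyhedron

theorem IsPolyhedron.exists_sharp_min_of_mem_extremePoints {E : Type*} [NormedAddCommGroup E]
    [NormedSpace ℝ E] [FiniteDimensional ℝ E] {P : Set E} (hP : IsPolyhedron P) {x : E}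
    (hx : x ∈ P.extremePoints ℝ) :
    ∃ M : E →L[ℝ] ℝ, ∃ ε > 0, ∀ z ∈ P, ε * ‖z - x‖ ≤ M z - M x := by
  obtain ⟨m, L, b, rfl⟩ := hP
  exact _root_.exists_sharp_min_of_mem_extremePoints L b hx

lemma isExposed_singleton_of_sharp_min {E : Type*} [NormedAddCommGroup E] [NormedSpace ℝ E]
    {P : Set E} {x : E} (hx : x ∈ P) {M : E →L[ℝ] ℝ} {ε : ℝ} (hε : 0 < ε)
    (hM : ∀ z ∈ P, ε * ‖z - x‖ ≤ M z - M x) : IsExposed ℝ P {x} := by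
  refine mem_exposedPoints_iff_exposed_singleton.1 ⟨hx, -M, fun z hz => ?_⟩
  have hgrowth := hM z hz
  have hnonneg := mul_nonneg hε.le (norm_nonneg (z - x))
  simp only [neg_apply, neg_le_neg_iff]
  refine ⟨by linarith, fun hle => ?_⟩
  have hzero : ‖z - x‖ = 0 := (mul_eq_zero.1 (by linarith : ε * ‖z - x‖ = 0)).resolve_left hε.ne'
  exact sub_eq_zero.1 (norm_eq_zero.1 hzero)

lemma vectorSpan_eq_top_of_ball_subset {E : Type*} [NormedAddCommGroup E] [NormedSpace ℝ E]
    {s : Set E} {c : E} {r : ℝ} (hr : 0 < r) (hs : Metric.ball c r ⊆ s) : vectorSpan ℝ s = ⊤ :=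
  AffineSubspace.vectorSpan_eq_top_of_affineSpan_eq_top ℝ E E <| top_unique <|
    (Metric.isOpen_ball.affineSpan_eq_top (Metric.nonempty_ball.2 hr)).ge.trans
      (affineSpan_mono ℝ hs)

lemma finrank_direction_affineSpan_eq_iff {n : ℕ} {s : Set (V n)} :
    Module.finrank ℝ (affineSpan ℝ s).direction = n ↔ vectorSpan ℝ s = ⊤ := by
  rw [direction_affineSpan, Submodule.eq_top_iff_finrank_eq, finrank_euclideanSpace_fin]

lemma iInf_eq_iff_forall_le {α ι : Type*} [CompleteLattice α] (f : ι → α) (i : ι) :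
    ⨅ j, f j = f i ↔ ∀ j, f i ≤ f j :=
  ⟨fun h j => h ▸ iInf_le f j, fun h => le_antisymm (iInf_le f i) (le_iInf h)⟩

section Tilt

variable {E : Type*} [NormedAddCommGroup E] [InnerProductSpace ℝ E]

/-- The set `T(w)` of the paper, with `f t = ⨅ v, ⟪t, v⟫ + g v` unfolded. -/
def optimalitySet (g : E → ℝ) (w : E) : Set E :=
  {t | ∀ v, inner ℝ t w + g w ≤ inner ℝ t v + g v}

def tilt (t : E) : E × ℝ →L[ℝ] ℝ := (innerSL ℝ t).coprod (ContinuousLinearMap.id ℝ ℝ)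

@[simp] lemma tilt_apply (t : E) (z : E × ℝ) : tilt t z = inner ℝ t z.1 + z.2 := by
  simp [tilt]

end Tilt

section Epigraph

variable {n : ℕ} {g : V n → ℝ} {w : V n}

lemma snd_eq_of_mem_extremePoints_epi {p : V n × ℝ} (hp : p ∈ (epi g).extremePoints ℝ) :
    p.2 = g p.1 := by
  have hle : g p.1 ≤ p.2 := hp.1
  have hmid : p ∈ openSegment ℝ (p.1, g p.1) (p.1, 2 * p.2 - g p.1) := by
    refine ⟨1 / 2, 1 / 2, by norm_num, by norm_num, by norm_num, ?_⟩
    ext <;> simp only [Prod.smul_mk, Prod.mk_add_mk, PiLp.add_apply, PiLp.smul_apply,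
      smul_eq_mul] <;> ring
  have hlow : ((p.1, g p.1) : V n × ℝ) = p :=
    hp.2 (le_refl (g p.1)) (show g p.1 ≤ 2 * p.2 - g p.1 by linarith) hmid
  exact (congrArg Prod.snd hlow).symm

lemma NonVerticalFace.subsingleton {P F : Set (V n × ℝ)} (hF : NonVerticalFace P F)
    (hw : ∀ p ∈ F, p.1 = w) : F.Subsingleton := by
  intro p hp q hq
  by_contra hpq
  have hsnd : p.2 - q.2 ≠ 0 := fun h =>
    hpq (Prod.ext (by rw [hw p hp, hw q hq]) (sub_eq_zero.1 h))
  have hdir : p -ᵥ q ∈ (affineSpan ℝ F).direction :=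
    AffineSubspace.vsub_mem_direction (subset_affineSpan ℝ F hp) (subset_affineSpan ℝ F hq)
  apply hF.2.2
  convert Submodule.smul_mem _ (p.2 - q.2)⁻¹ hdir using 1
  ext <;> simp [hw p hp, hw q hq, hsnd]

lemma mem_extremePoints_epi_of_nonVerticalFace {F : Set (V n × ℝ)}
    (hF : NonVerticalFace (epi g) F) (hFw : {w} = Prod.fst '' F) :
    (w, g w) ∈ (epi g).extremePoints ℝ := by
  have hw : ∀ p ∈ F, p.1 = w := fun p hp => by
    simpa [← hFw] using mem_image_of_mem Prod.fst hp
  obtain ⟨p, hp⟩ := hF.2.1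
  have hFp : F = {p} := (hF.subsingleton hw).eq_singleton_of_mem hp
  have hext : p ∈ (epi g).extremePoints ℝ := isExtreme_singleton.1 (hFp ▸ hF.1.isExtreme)
  have hpw : p = (w, g w) :=
    Prod.ext (hw p hp) (by rw [snd_eq_of_mem_extremePoints_epi hext, hw p hp])
  exact hpw ▸ hext

lemma nonVerticalFace_singleton {P : Set (V n × ℝ)} {x : V n × ℝ} (hx : IsExposed ℝ P {x}) :
    NonVerticalFace P {x} :=
  ⟨hx, singleton_nonempty x, by simp [direction_affineSpan, vectorSpan_singleton]⟩

lemma mem_optimalitySet_iff {t : V n} :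
    t ∈ optimalitySet g w ↔ ∀ z ∈ epi g, tilt t (w, g w) ≤ tilt t z := by
  simp only [optimalitySet, mem_ofPred_eq, tilt_apply]
  exact ⟨fun h z hz => (h z.1).trans (by gcongr; exact hz),
    fun h v => h (v, g v) (le_refl (g v))⟩

lemma fst_eq_of_mem_openSegment_of_vectorSpan_eq_top
    (hT : vectorSpan ℝ (optimalitySet g w) = ⊤) {p q : V n × ℝ} (hp : p ∈ epi g)
    (hq : q ∈ epi g) (hx : (w, g w) ∈ openSegment ℝ p q) : p.1 = w := by
  have htilt : ∀ t ∈ optimalitySet g w, tilt t p = tilt t (w, g w) := fun t ht =>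
    map_eq_of_mem_openSegment_of_le (tilt t) hx (mem_optimalitySet_iff.1 ht p hp)
      (mem_optimalitySet_iff.1 ht q hq)
  have hker : vectorSpan ℝ (optimalitySet g w) ≤ LinearMap.ker (innerₗ (V n) (p.1 - w)) := by
    rw [vectorSpan_def, Submodule.span_le]
    rintro _ ⟨t₁, ht₁, t₂, ht₂, rfl⟩
    have h₁ := htilt t₁ ht₁
    have h₂ := htilt t₂ ht₂
    simp only [tilt_apply] at h₁ h₂
    change inner ℝ (p.1 - w) (t₁ - t₂) = 0
    rw [real_inner_comm]
    simp only [inner_sub_left, inner_sub_right]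
    linarith
  have hself := hker (hT ▸ Submodule.mem_top (x := p.1 - w))
  exact sub_eq_zero.1 (inner_self_eq_zero.1 (LinearMap.mem_ker.1 hself))

lemma mem_extremePoints_epi_of_vectorSpan_eq_top (hT : vectorSpan ℝ (optimalitySet g w) = ⊤) :
    (w, g w) ∈ (epi g).extremePoints ℝ := by
  refine ⟨le_refl (g w), fun p hp q hq hx => ?_⟩
  have hp₁ := fst_eq_of_mem_openSegment_of_vectorSpan_eq_top hT hp hq hx
  have hq₁ := fst_eq_of_mem_openSegment_of_vectorSpan_eq_top hT hq hp (openSegment_symm ℝ p q ▸ hx)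
  have hp₂ : p.2 = g w := map_eq_of_mem_openSegment_of_le (LinearMap.snd ℝ (V n) ℝ) hx
    (show g w ≤ p.2 from hp₁ ▸ hp) (show g w ≤ q.2 from hq₁ ▸ hq)
  exact Prod.ext hp₁ hp₂

lemma exists_ball_subset_optimalitySet_of_sharp_min {M : V n × ℝ →L[ℝ] ℝ} {ε : ℝ} (hε : 0 < ε)
    (hM : ∀ z ∈ epi g, ε * ‖z - (w, g w)‖ ≤ M z - M (w, g w)) :
    ∃ t₀, ∃ r > 0, Metric.ball t₀ r ⊆ optimalitySet g w := by
  set x : V n × ℝ := (w, g w)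
  set c := M (0, 1)
  have hc : ε ≤ c := by
    have h := hM (w, g w + 1) (show g w ≤ g w + 1 by linarith)
    have hup : ((w, g w + 1) : V n × ℝ) - x = (0, 1) := by ext <;> simp [x]
    rwa [← map_sub, hup, show ‖((0, 1) : V n × ℝ)‖ = 1 by simp, mul_one] at h
  have hc₀ : 0 < c := hε.trans_le hc
  -- the Riesz representative making `tilt t₀ = c⁻¹ • M`
  set t₀ := (InnerProductSpace.toDual ℝ (V n)).symm
    (c⁻¹ • M.comp (ContinuousLinearMap.inl ℝ (V n) ℝ))
  have htilt₀ : ∀ z, tilt t₀ z = c⁻¹ * M z := by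
    rintro ⟨v, s⟩
    have hvs : M (v, s) = M (v, 0) + s * c := by
      rw [← smul_eq_mul, ← map_smul, ← map_add]
      simp only [Prod.smul_mk, smul_zero, smul_eq_mul, mul_one, Prod.mk_add_mk, add_zero, zero_add]
    rw [tilt_apply, InnerProductSpace.toDual_symm_apply, hvs]
    simp only [smul_apply, ContinuousLinearMap.comp_apply, ContinuousLinearMap.inl_apply,
      smul_eq_mul]
    field_simp
  refine ⟨t₀, ε / c, by positivity, fun t ht => mem_optimalitySet_iff.2 fun z hz => ?_⟩
  have hdist : ‖t - t₀‖ < ε / c := by rwa [← dist_eq_norm]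
  have hsplit : tilt t z - tilt t x = tilt t₀ (z - x) + inner ℝ (t - t₀) (z - x).1 := by
    simp only [tilt_apply, Prod.fst_sub, Prod.snd_sub, inner_sub_left, inner_sub_right]
    ring
  have hlower : ε / c * ‖z - x‖ ≤ tilt t₀ (z - x) :=
    calc ε / c * ‖z - x‖ = c⁻¹ * (ε * ‖z - x‖) := by ring
      _ ≤ c⁻¹ * (M z - M x) := by gcongr; exact hM z hz
      _ = tilt t₀ (z - x) := by rw [htilt₀, map_sub]
  have hcs : -(ε / c * ‖z - x‖) ≤ inner ℝ (t - t₀) (z - x).1 :=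
    calc -(ε / c * ‖z - x‖) ≤ -(‖t - t₀‖ * ‖(z - x).1‖) :=
          neg_le_neg (mul_le_mul hdist.le (norm_fst_le _) (norm_nonneg _) (by positivity))
      _ ≤ _ := neg_le_of_abs_le (abs_real_inner_le_norm _ _)
  linarith

end Epigraph

theorem stmt9_general (n : ℕ) (g : V n → ℝ)
    (hpoly : IsPolyhedron (epi g))
    (f : V n → EReal)
    (hf : ∀ t, f t = ⨅ w : V n, (((inner ℝ t w : ℝ) + g w : ℝ) : EReal))
    (Tw : V n → Set (V n))
    (hT : ∀ w, Tw w = {t | f t = (((inner ℝ t w : ℝ) + g w : ℝ) : EReal)})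
    (w : V n) :
    ((∃ F : Set (V n × ℝ), NonVerticalFace (epi g) F ∧ {w} = Prod.fst '' F) ↔
      (w, g w) ∈ Set.extremePoints ℝ (epi g)) ∧
    ((w, g w) ∈ Set.extremePoints ℝ (epi g) ↔
      Module.finrank ℝ (affineSpan ℝ (Tw w)).direction = n) := by
  have hTw : Tw w = optimalitySet g w := by
    ext t
    simp only [hT, hf, mem_ofPred_eq, optimalitySet, iInf_eq_iff_forall_le, EReal.coe_le_coe_iff]
  refine ⟨⟨fun ⟨F, hF, hFw⟩ => mem_extremePoints_epi_of_nonVerticalFace hF hFw, fun hx => ?_⟩, ?_⟩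
  · obtain ⟨M, ε, hε, hM⟩ := hpoly.exists_sharp_min_of_mem_extremePoints hx
    exact ⟨{(w, g w)}, nonVerticalFace_singleton (isExposed_singleton_of_sharp_min hx.1 hε hM),
      by simp⟩
  rw [hTw, finrank_direction_affineSpan_eq_iff]
  refine ⟨fun hx => ?_, mem_extremePoints_epi_of_vectorSpan_eq_top⟩
  obtain ⟨M, ε, hε, hM⟩ := hpoly.exists_sharp_min_of_mem_extremePoints hx
  obtain ⟨t₀, r, hr, hball⟩ := exists_ball_subset_optimalitySet_of_sharp_min hε hM
  exact vectorSpan_eq_top_of_ball_subset hr hball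

/-- for `w ≥ 0`, `{w}` is a reaction set (strong bilevel
feasibility) iff `(w, g w)` is an extreme point of `epi g`, iff
`dim T(w) = n`. -/
theorem stmt9 (n : ℕ) (g : V n → ℝ)
    (hpoly : IsPolyhedron (epi g)) (hconv : ConvexOn ℝ univ g)
    (f : V n → EReal)
    (hf : ∀ t, f t = ⨅ w : V n, (((inner ℝ t w : ℝ) + g w : ℝ) : EReal))
    (Tw : V n → Set (V n))
    (hT : ∀ w, Tw w = {t | f t = (((inner ℝ t w : ℝ) + g w : ℝ) : EReal)})
    (w : V n) (hw : ∀ i, 0 ≤ w i) :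
    ((∃ F : Set (V n × ℝ), NonVerticalFace (epi g) F ∧ {w} = Prod.fst '' F) ↔
      (w, g w) ∈ Set.extremePoints ℝ (epi g)) ∧
    ((w, g w) ∈ Set.extremePoints ℝ (epi g) ↔
      Module.finrank ℝ (affineSpan ℝ (Tw w)).direction = n) :=
  stmt9_general n g hpoly f hf Tw hT w
end
end

section
/- Let g be the infimal convolution of polyhedral convex functions g¹,…,g^K. If (w, g(w)) is an extreme point of epi(g), and (w^k) is any decomposition with Σ w^k = w and Σ g^k(w^k) = g(w), then each (w^k, g^k(w^k)) is an extreme point of epi(g^k). -/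
noncomputable section
open Set

/-!
Fix the other pieces `(W k)_{k ≠ k₀}` of an optimal decomposition. Since `g` is a lower bound
for every decomposition, translating `epi (g^{k₀})` by
`(∑_{k ≠ k₀} W k, ∑_{k ≠ k₀} g^k (W k))` lands inside `epi g`, and the translation carries
`(W k₀, g^{k₀} (W k₀))` to `(w, g w)`.
A translation mapping one set into another pulls extreme points back to extreme points.
-/

theorem mem_extremePoints_of_add_mem_extremePoints {𝕜 E : Type*} [Ring 𝕜] [PartialOrder 𝕜]
    [IsOrderedRing 𝕜] [AddCommGroup E] [Module 𝕜 E] {A B : Set E} {v x : E} (hx : x ∈ A)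
    (hAB : ∀ p ∈ A, v + p ∈ B) (hext : v + x ∈ B.extremePoints 𝕜) :
    x ∈ A.extremePoints 𝕜 := by
  refine ⟨hx, fun x₁ hx₁ x₂ hx₂ hseg => ?_⟩
  simpa using hext.2 (hAB _ hx₁) (hAB _ hx₂) ((mem_openSegment_translate 𝕜 v).2 hseg)

theorem sum_apply_update_eq_sum_erase_add {ι α M : Type*} [Fintype ι] [DecidableEq ι]
    [AddCommMonoid M] (F : ι → α → M) (W : ι → α) (k₀ : ι) (x : α) :
    ∑ k, F k (Function.update W k₀ x k)
      = ∑ k ∈ Finset.univ.erase k₀, F k (W k) + F k₀ x := by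
  rw [← Finset.sum_erase_add _ _ (Finset.mem_univ k₀), Function.update_self]
  congr 1
  exact Finset.sum_congr rfl fun k hk => by rw [Function.update_of_ne (Finset.ne_of_mem_erase hk)]

theorem add_mem_epi_of_le_sum {ι : Type*} [Fintype ι] [DecidableEq ι] {n : ℕ}
    {gk : ι → V n → ℝ} {g : V n → ℝ}
    (hlow : ∀ W : ι → V n, g (∑ k, W k) ≤ ∑ k, gk k (W k))
    (W : ι → V n) (k₀ : ι) {p : V n × ℝ} (hp : p ∈ epi (gk k₀)) :
    (∑ k ∈ Finset.univ.erase k₀, W k, ∑ k ∈ Finset.univ.erase k₀, gk k (W k)) + p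
      ∈ epi g := by
  calc g (∑ k ∈ Finset.univ.erase k₀, W k + p.1)
        = g (∑ k, Function.update W k₀ p.1 k) :=
          congrArg g (sum_apply_update_eq_sum_erase_add (fun _ => id) W k₀ p.1).symm
    _ ≤ ∑ k, gk k (Function.update W k₀ p.1 k) := hlow _
    _ = ∑ k ∈ Finset.univ.erase k₀, gk k (W k) + gk k₀ p.1 :=
          sum_apply_update_eq_sum_erase_add gk W k₀ p.1
    _ ≤ ∑ k ∈ Finset.univ.erase k₀, gk k (W k) + p.2 := (add_le_add_iff_left _).2 hp

theorem stmt11_general (n K : ℕ) (gk : Fin K → V n → ℝ)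
    (g : V n → ℝ)
    (hg : ∀ w : V n, IsLeast
      {s | ∃ W : Fin K → V n, (∑ k, W k) = w ∧ s = ∑ k, gk k (W k)} (g w))
    (w : V n)
    (hext : (w, g w) ∈ Set.extremePoints ℝ (epi g))
    (W : Fin K → V n)
    (hsum : (∑ k, W k) = w) (hval : (∑ k, gk k (W k)) = g w) :
    ∀ k, (W k, gk k (W k)) ∈ Set.extremePoints ℝ (epi (gk k)) := by
  intro k₀
  have hlow : ∀ W' : Fin K → V n, g (∑ k, W' k) ≤ ∑ k, gk k (W' k) :=
    fun W' => (hg _).2 ⟨W', rfl, rfl⟩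
  have hshift :
      (∑ k ∈ Finset.univ.erase k₀, W k, ∑ k ∈ Finset.univ.erase k₀, gk k (W k))
        + (W k₀, gk k₀ (W k₀)) = (w, g w) := by
    rw [← hval, ← hsum, Prod.mk_add_mk, Finset.sum_erase_add _ _ (Finset.mem_univ k₀),
      Finset.sum_erase_add _ (fun k => gk k (W k)) (Finset.mem_univ k₀)]
  exact mem_extremePoints_of_add_mem_extremePoints (le_refl (gk k₀ (W k₀)))
    (fun p hp => add_mem_epi_of_le_sum hlow W k₀ hp) (hshift ▸ hext)

/-- if `(w, g w)` is an extreme point of `epi g`, `g` the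
(attained) infimal convolution of polyhedral convex `g^k`, then every optimal
decomposition of `w` consists of extreme points of the `epi (g^k)`. -/
theorem stmt11 (n K : ℕ) (gk : Fin K → V n → ℝ)
    (hconv : ∀ k, ConvexOn ℝ univ (gk k))
    (hpoly : ∀ k, IsPolyhedron (epi (gk k)))
    (g : V n → ℝ)
    (hg : ∀ w : V n, IsLeast
      {s | ∃ W : Fin K → V n, (∑ k, W k) = w ∧ s = ∑ k, gk k (W k)} (g w))
    (w : V n)
    (hext : (w, g w) ∈ Set.extremePoints ℝ (epi g))
    (W : Fin K → V n)
    (hsum : (∑ k, W k) = w) (hval : (∑ k, gk k (W k)) = g w) :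
    ∀ k, (W k, gk k (W k)) ∈ Set.extremePoints ℝ (epi (gk k)) :=
  stmt11_general n K gk g hg w hext W hsum hval
end
end

section
/- Conversely, let g be the infimal convolution of polyhedral convex functions g¹,…,g^K. If (w, g(w)) is NOT an extreme point of epi(g), then there exists an optimal decomposition (w^k) of w (i.e., Σ w^k = w, Σ g^k(w^k) = g(w)) such that for some k, (w^k, g^k(w^k)) is not an extreme point of epi(g^k). -/
noncomputable section
open Set

/-- conversely, if `(w, g w)` is not an extreme point of `epi g`,
then some optimal decomposition of `w` has a component `(w^k, g^k(w^k))` that is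
not an extreme point of `epi (g^k)`. -/
theorem stmt12 (n K : ℕ) (gk : Fin K → V n → ℝ)
    (hconv : ∀ k, ConvexOn ℝ univ (gk k))
    (hpoly : ∀ k, IsPolyhedron (epi (gk k)))
    (g : V n → ℝ)
    (hg : ∀ w : V n, IsLeast
      {s | ∃ W : Fin K → V n, (∑ k, W k) = w ∧ s = ∑ k, gk k (W k)} (g w))
    (w : V n)
    (hnext : (w, g w) ∉ Set.extremePoints ℝ (epi g)) :
    ∃ W : Fin K → V n, (∑ k, W k) = w ∧ (∑ k, gk k (W k)) = g w ∧
      ∃ k, (W k, gk k (W k)) ∉ Set.extremePoints ℝ (epi (gk k)) := by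
  by_contra hcon
  push_neg at hcon
  apply hnext
  obtain ⟨-, hlb⟩ := hg w
  refine mem_extremePoints.2 ⟨show g w ≤ g w from le_refl _, ?_⟩
  rintro x₁ hx₁ x₂ hx₂ ⟨a, b, ha, hb, hab, hsum⟩
  obtain ⟨⟨W₁, hW₁s, hW₁v⟩, -⟩ := hg x₁.1
  obtain ⟨⟨W₂, hW₂s, hW₂v⟩, -⟩ := hg x₂.1
  set W : Fin K → V n := fun k => a • W₁ k + b • W₂ k with hWdef
  have hfst : a • x₁.1 + b • x₂.1 = w := congrArg Prod.fst hsum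
  have hsnd : a * x₁.2 + b * x₂.2 = g w := congrArg Prod.snd hsum
  have hWsum : (∑ k, W k) = w := by
    simp only [hWdef, Finset.sum_add_distrib, ← Finset.smul_sum, hW₁s, hW₂s, hfst]
  have hchain1 : ∀ k, gk k (W k) ≤ a * gk k (W₁ k) + b * gk k (W₂ k) := by
    intro k
    have := (hconv k).2 (mem_univ (W₁ k)) (mem_univ (W₂ k)) ha.le hb.le hab
    simpa [smul_eq_mul] using this
  have hle1 : g w ≤ ∑ k, gk k (W k) := hlb ⟨W, hWsum, rfl⟩
  have hle2 : (∑ k, gk k (W k)) ≤ ∑ k, (a * gk k (W₁ k) + b * gk k (W₂ k)) :=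
    Finset.sum_le_sum fun k _ => hchain1 k
  have heq3 : (∑ k, (a * gk k (W₁ k) + b * gk k (W₂ k))) = a * g x₁.1 + b * g x₂.1 := by
    rw [Finset.sum_add_distrib, ← Finset.mul_sum, ← Finset.mul_sum, ← hW₁v, ← hW₂v]
  have hx₁' : g x₁.1 ≤ x₁.2 := hx₁
  have hx₂' : g x₂.1 ≤ x₂.2 := hx₂
  have hle4 : a * g x₁.1 + b * g x₂.1 ≤ a * x₁.2 + b * x₂.2 :=
    add_le_add (mul_le_mul_of_nonneg_left hx₁' ha.le)
      (mul_le_mul_of_nonneg_left hx₂' hb.le)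
  -- all inequalities are equalities
  have key : a * g x₁.1 + b * g x₂.1 = a * x₁.2 + b * x₂.2 := by linarith
  have p1 : 0 ≤ a * (x₁.2 - g x₁.1) := mul_nonneg ha.le (sub_nonneg.2 hx₁')
  have p2 : 0 ≤ b * (x₂.2 - g x₂.1) := mul_nonneg hb.le (sub_nonneg.2 hx₂')
  have s0 : a * (x₁.2 - g x₁.1) + b * (x₂.2 - g x₂.1) = 0 := by
    have : a * (x₁.2 - g x₁.1) + b * (x₂.2 - g x₂.1)
        = (a * x₁.2 + b * x₂.2) - (a * g x₁.1 + b * g x₂.1) := by ring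
    rw [this, ← key]; ring
  have z1 : a * (x₁.2 - g x₁.1) = 0 := by linarith
  have z2 : b * (x₂.2 - g x₂.1) = 0 := by linarith
  have hA : g x₁.1 = x₁.2 := by
    have := (mul_eq_zero.1 z1).resolve_left ha.ne'
    linarith
  have hB : g x₂.1 = x₂.2 := by
    have := (mul_eq_zero.1 z2).resolve_left hb.ne'
    linarith
  have hWval : (∑ k, gk k (W k)) = g w := by linarith
  have hsumeq : (∑ k, gk k (W k)) = ∑ k, (a * gk k (W₁ k) + b * gk k (W₂ k)) := by
    linarith
  have hterm : ∀ k, gk k (W k) = a * gk k (W₁ k) + b * gk k (W₂ k) := by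
    intro k
    exact (Finset.sum_eq_sum_iff_of_le (fun k _ => hchain1 k)).1 hsumeq k
      (Finset.mem_univ k)
  have hW1 : ∀ k, W₁ k = W k ∧ W₂ k = W k := by
    intro k
    have hext := hcon W hWsum hWval k
    obtain ⟨-, h2⟩ := mem_extremePoints.1 hext
    have hmem1 : (W₁ k, gk k (W₁ k)) ∈ epi (gk k) := show gk k _ ≤ _ from le_refl _
    have hmem2 : (W₂ k, gk k (W₂ k)) ∈ epi (gk k) := show gk k _ ≤ _ from le_refl _
    have hseg : (W k, gk k (W k)) ∈
        openSegment ℝ (W₁ k, gk k (W₁ k)) (W₂ k, gk k (W₂ k)) := by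
      refine ⟨a, b, ha, hb, hab, ?_⟩
      refine Prod.ext rfl ?_
      simpa [smul_eq_mul] using (hterm k).symm
    obtain ⟨e1, e2⟩ := h2 _ hmem1 _ hmem2 hseg
    exact ⟨congrArg Prod.fst e1, congrArg Prod.fst e2⟩
  have hx1w : x₁.1 = w := by
    rw [← hW₁s]
    rw [show (∑ k, W₁ k) = ∑ k, W k from Finset.sum_congr rfl fun k _ => (hW1 k).1]
    exact hWsum
  have hx2w : x₂.1 = w := by
    rw [← hW₂s]
    rw [show (∑ k, W₂ k) = ∑ k, W k from Finset.sum_congr rfl fun k _ => (hW1 k).2]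
    exact hWsum
  constructor
  · exact Prod.ext hx1w (by rw [← hA, hx1w])
  · exact Prod.ext hx2w (by rw [← hB, hx2w])
end
end

section
/- Let f = Σ_k f^k where each f^k is a polyhedral concave function on ℝⁿ, and let g, g^k be the respective concave conjugates g(w) = sup_t (f(t) − ⟨t,w⟩). A tuple (w^k) with Σ_k w^k = w satisfies g(w) = Σ_k g^k(w^k) if and only if T(w) = ⋂_k T^k(w^k), where T(w) (resp. T^k(w^k)) is the set of t attaining f(t) − ⟨t,w⟩ = g(w) (resp. f^k(t) − ⟨t,w^k⟩ = g^k(w^k)), provided these sets are nonempty. -/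
noncomputable section
open Set

/-!
Writing `w = Σ w^k`, the objective `f t - ⟪t, w⟫` splits as `Σ_k (f^k t - ⟪t, w^k⟫)`, and each
summand is bounded by `g^k(w^k)`. Hence `g(w) ≤ Σ g^k(w^k)`, and when equality holds a point attains
`g(w)` exactly when it attains every `g^k(w^k)`. Conversely, a maximiser of the total objective that
lies in every `T^k(w^k)` shows `g(w) = Σ g^k(w^k)`.
-/

section LevelSets

variable {ι α : Type*} [Fintype ι]

theorem setOf_sum_eq_sum_eq_iInter (φ : ι → α → ℝ) (c : ι → ℝ) (hφ : ∀ k t, φ k t ≤ c k) :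
    {t | ∑ k, φ k t = ∑ k, c k} = ⋂ k, {t | φ k t = c k} := by
  ext t
  simpa using Finset.sum_eq_sum_iff_of_le (s := Finset.univ) fun k _ => hφ k t

theorem eq_sum_of_setOf_sum_eq_eq_iInter {φ : ι → α → ℝ} {c : ι → ℝ} {g : ℝ}
    (hg : ∃ t, ∑ k, φ k t = g) (h : {t | ∑ k, φ k t = g} = ⋂ k, {t | φ k t = c k}) :
    g = ∑ k, c k := by
  obtain ⟨t, ht⟩ := hg
  have hmem : ∀ k, φ k t = c k := by
    simpa using (h ▸ ht : t ∈ ⋂ k, {t | φ k t = c k})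
  rw [← ht]
  exact Finset.sum_congr rfl fun k _ => hmem k

end LevelSets

theorem stmt14_general (n K : ℕ) (fk : Fin K → V n → ℝ)
    (f : V n → ℝ) (hf : ∀ t, f t = ∑ k, fk k t)
    (w : V n) (W : Fin K → V n) (hsum : (∑ k, W k) = w)
    (gw : ℝ)
    (hgw : IsGreatest {s | ∃ t : V n, s = f t - (inner ℝ t w : ℝ)} gw)
    (gk : Fin K → ℝ)
    (hgk : ∀ k, IsGreatest
      {s | ∃ t : V n, s = fk k t - (inner ℝ t (W k) : ℝ)} (gk k)) :
    gw = (∑ k, gk k) ↔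
      {t : V n | f t - (inner ℝ t w : ℝ) = gw}
        = ⋂ k, {t : V n | fk k t - (inner ℝ t (W k) : ℝ) = gk k} := by
  have hsplit : ∀ t, f t - (inner ℝ t w : ℝ) = ∑ k, (fk k t - (inner ℝ t (W k) : ℝ)) := by
    intro t
    rw [hf, ← hsum, inner_sum, Finset.sum_sub_distrib]
  simp only [hsplit] at hgw ⊢
  constructor
  · rintro rfl
    exact setOf_sum_eq_sum_eq_iInter _ _ fun k t => (hgk k).2 ⟨t, rfl⟩
  · obtain ⟨t, ht⟩ := hgw.1
    exact eq_sum_of_setOf_sum_eq_eq_iInter ⟨t, ht.symm⟩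

/-- with `f = Σ f^k` polyhedral concave and `g, g^k` the concave
conjugates (maxima attained), a decomposition `Σ w^k = w` satisfies
`g(w) = Σ g^k(w^k)` iff `T(w) = ⋂_k T^k(w^k)`. -/
theorem stmt14 (n K : ℕ) (fk : Fin K → V n → ℝ)
    (hconc : ∀ k, ConcaveOn ℝ univ (fk k))
    (hpoly : ∀ k, IsPolyhedron {p : V n × ℝ | p.2 ≤ fk k p.1})
    (f : V n → ℝ) (hf : ∀ t, f t = ∑ k, fk k t)
    (w : V n) (W : Fin K → V n) (hsum : (∑ k, W k) = w)
    (gw : ℝ)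
    (hgw : IsGreatest {s | ∃ t : V n, s = f t - (inner ℝ t w : ℝ)} gw)
    (gk : Fin K → ℝ)
    (hgk : ∀ k, IsGreatest
      {s | ∃ t : V n, s = fk k t - (inner ℝ t (W k) : ℝ)} (gk k)) :
    gw = (∑ k, gk k) ↔
      {t : V n | f t - (inner ℝ t w : ℝ) = gw}
        = ⋂ k, {t : V n | fk k t - (inner ℝ t (W k) : ℝ) = gk k} :=
  stmt14_general n K fk f hf w W hsum gw hgw gk hgk
end
end

section
/- Let X ⊆ ℝ^A be a polyhedron (the follower's feasible flows), A₁ ⊆ A the tolled arcs, c ≥ 0 costs, and f(t) = min_{x∈X} (⟨c,x⟩ + ⟨t, x_{A₁}⟩) for t ≥ 0. A point x ∈ X is bilevel feasible (∃ t ≥ 0 with f(t) = ⟨c,x⟩ + ⟨t, x_{A₁}⟩) if and only if ⟨c,x⟩ = g(x_{A₁}), where g(w) = sup_{t ≥ 0} (f(t) − ⟨t,w⟩). -/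
/-!
Since `f t ≤ ⟨c, x⟩ + ⟨t, x_{A₁}⟩`, every value `f t - ⟨t, x_{A₁}⟩` is at most `⟨c, x⟩`; so the
forward direction is immediate, and the point is that `g(x_{A₁}) = ⟨c, x⟩` forces the supremum to
be attained. Under that equality no `y ∈ X` with `y ≤ x` on `A₁` is cheaper than `x` for `c`. The
affine Farkas lemma, applied to the system `y ∈ X, y_{A₁} ≤ x_{A₁}`, writes the bound
`⟨c, y⟩ ≥ ⟨c, x⟩` as a nonnegative combination of the constraints, and the multipliers of the
constraints `y_a ≤ x_a` form a toll `t` for which `x` is optimal. Farkas' lemma is hyperplane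
separation from a finitely generated cone, which is closed by the conic Carathéodory theorem.
-/

noncomputable section
open Set Finset

section Caratheodory

variable {ι E : Type*} [AddCommGroup E] [Module ℝ E]

theorem exists_mem_erase_sum_eq_of_sum_smul_eq_zero [DecidableEq ι] {v : ι → E} {s : Finset ι}
    {l g : ι → ℝ} (hl : ∀ i ∈ s, 0 ≤ l i) (hg : ∑ i ∈ s, g i • v i = 0) (hpos : ∃ i ∈ s, 0 < g i) :
    ∃ k ∈ s, ∃ l' : ι → ℝ, (∀ i ∈ s.erase k, 0 ≤ l' i) ∧
      ∑ i ∈ s.erase k, l' i • v i = ∑ i ∈ s, l i • v i := by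
  obtain ⟨j, hj, hgj⟩ := hpos
  obtain ⟨k, hkT, hkmin⟩ := (s.filter (0 < g ·)).exists_min_image (fun i => l i / g i)
    ⟨j, Finset.mem_filter.2 ⟨hj, hgj⟩⟩
  obtain ⟨hks, hgk⟩ := Finset.mem_filter.1 hkT
  set τ := l k / g k
  have hτ : 0 ≤ τ := div_nonneg (hl k hks) hgk.le
  refine ⟨k, hks, fun i => l i - τ * g i, fun i hi => ?_, ?_⟩
  · have his := Finset.mem_of_mem_erase hi
    rcases lt_or_ge 0 (g i) with hgi | hgi
    · have := hkmin i (Finset.mem_filter.2 ⟨his, hgi⟩)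
      have : τ * g i ≤ l i := (le_div_iff₀ hgi).1 this
      linarith
    · nlinarith [hl i his]
  · have hk : l k - τ * g k = 0 := by rw [div_mul_cancel₀ _ hgk.ne', sub_self]
    rw [Finset.sum_erase _ (by simp only [hk, zero_smul])]
    simp only [sub_smul, mul_smul, Finset.sum_sub_distrib, ← Finset.smul_sum, hg, smul_zero,
      sub_zero]

theorem exists_linearIndepOn_subset_sum_smul_eq (v : ι → E) (s : Finset ι) (l : ι → ℝ)
    (hl : ∀ i ∈ s, 0 ≤ l i) :
    ∃ t ⊆ s, LinearIndepOn ℝ v (t : Set ι) ∧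
      ∃ μ : t → ℝ, 0 ≤ μ ∧ ∑ i, μ i • v i = ∑ i ∈ s, l i • v i := by
  classical
  induction s using Finset.strongInduction generalizing l with
  | _ s ih =>
  by_cases hli : LinearIndepOn ℝ v (s : Set ι)
  · exact ⟨s, subset_rfl, hli, fun i => l i, fun i => hl i i.2,
      Finset.sum_coe_sort s fun i => l i • v i⟩
  obtain ⟨g, hg, j, hj, hgj⟩ := not_linearIndepOn_finset_iff.1 hli
  have hrel : ∃ g : ι → ℝ, ∑ i ∈ s, g i • v i = 0 ∧ ∃ i ∈ s, 0 < g i := by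
    rcases hgj.lt_or_gt with hneg | hpos
    · exact ⟨-g, by simp [neg_smul, hg], j, hj, by simpa using hneg⟩
    · exact ⟨g, hg, j, hj, hpos⟩
  obtain ⟨g, hg, hpos⟩ := hrel
  obtain ⟨k, hks, l', hl', hsum⟩ := exists_mem_erase_sum_eq_of_sum_smul_eq_zero hl hg hpos
  obtain ⟨t, hts, htli, μ, hμ, hμsum⟩ := ih _ (Finset.erase_ssubset hks) l' hl'
  exact ⟨t, hts.trans (Finset.erase_subset _ _), htli, μ, hμ, hμsum.trans hsum⟩

end Caratheodory

namespace PointedCone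

variable {ι E : Type*} [AddCommGroup E] [Module ℝ E]

theorem mem_hull_range_iff [Fintype ι] {v : ι → E} {z : E} :
    z ∈ hull ℝ (range v) ↔ ∃ l : ι → ℝ, 0 ≤ l ∧ ∑ i, l i • v i = z := by
  rw [Submodule.mem_span_range_iff_exists_fun]
  constructor
  · rintro ⟨c, rfl⟩
    exact ⟨fun i => c i, fun i => (c i).2, by simp only [Nonneg.coe_smul]⟩
  · rintro ⟨l, hl, rfl⟩
    exact ⟨fun i => ⟨l i, hl i⟩, by simp only [Nonneg.mk_smul]⟩

theorem isClosed_hull_range [TopologicalSpace E] [IsTopologicalAddGroup E] [ContinuousSMul ℝ E]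
    [T2Space E] [Finite ι] (v : ι → E) : IsClosed (hull ℝ (range v) : Set E) := by
  classical
  cases nonempty_fintype ι
  have hunion : (hull ℝ (range v) : Set E) =
      ⋃ t : {t : Finset ι // LinearIndepOn ℝ v (t : Set ι)},
        Fintype.linearCombination ℝ (fun i : t.1 => v i) '' Ici 0 := by
    ext z
    simp only [SetLike.mem_coe, mem_iUnion, mem_image, Set.mem_Ici,
      Fintype.linearCombination_apply]
    constructor
    · rw [mem_hull_range_iff]
      rintro ⟨l, hl, rfl⟩
      obtain ⟨t, -, htli, μ, hμ, hμsum⟩ :=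
        exists_linearIndepOn_subset_sum_smul_eq v univ l fun i _ => hl i
      exact ⟨⟨t, htli⟩, μ, hμ, hμsum⟩
    · rintro ⟨t, μ, hμ, rfl⟩
      exact Submodule.sum_mem _ fun i _ =>
        (hull ℝ (range v)).smul_mem (hμ i) (subset_hull (mem_range_self _))
  rw [hunion]
  refine isClosed_iUnion_of_finite fun t => ?_
  have hinj := LinearMap.isClosedEmbedding_of_injective (LinearMap.ker_eq_bot.2
    (LinearIndependent.fintypeLinearCombination_injective t.2))
  exact hinj.isClosedMap _ isClosed_Ici

theorem exists_dual_nonneg_of_notMem_hull_range [TopologicalSpace E] [IsTopologicalAddGroup E]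
    [ContinuousSMul ℝ E] [LocallyConvexSpace ℝ E] [T2Space E] [Finite ι] (v : ι → E) {z : E}
    (hz : z ∉ hull ℝ (range v)) :
    ∃ g : StrongDual ℝ E, (∀ i, 0 ≤ g (v i)) ∧ g z < 0 := by
  let K : ProperCone ℝ E := ⟨hull ℝ (range v), isClosed_hull_range v⟩
  obtain ⟨g, hg, hgz⟩ := K.hyperplane_separation_point hz
  exact ⟨g, fun i => hg _ (subset_hull (mem_range_self i)), hgz⟩

end PointedCone

section Farkas

variable {ι E : Type*} [AddCommGroup E] [Module ℝ E]

theorem exists_lt_of_homogeneous_solution {L : ι → E →ₗ[ℝ] ℝ} {b : ι → ℝ} {d : E →ₗ[ℝ] ℝ} {β s : ℝ}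
    {y₀ w : E} (hy₀ : ∀ i, L i y₀ ≤ b i) (hw : ∀ i, L i w ≤ s * b i) (hs : 0 ≤ s)
    (hdw : s * β < d w) :
    ∃ u, (∀ i, L i u ≤ b i) ∧ β < d u := by
  set τ := max 0 ((β - d y₀) / (d w - s * β)) + 1
  have hδ : 0 < d w - s * β := sub_pos.2 hdw
  have hτ : 0 < τ := by positivity
  have hτδ : β - d y₀ < τ * (d w - s * β) := by
    have : (β - d y₀) / (d w - s * β) < τ := by
      linarith [le_max_right 0 ((β - d y₀) / (d w - s * β))]
    exact (div_lt_iff₀ hδ).1 this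
  have hden : 0 < 1 + τ * s := by positivity
  -- Moves from `y₀` towards `s⁻¹ • w` if `s > 0`, and along the recession direction `w` if `s = 0`.
  refine ⟨(1 + τ * s)⁻¹ • (y₀ + τ • w), fun i => ?_, ?_⟩
  · rw [map_smul, map_add, map_smul, smul_eq_mul, smul_eq_mul, inv_mul_le_iff₀ hden]
    nlinarith [hy₀ i, hw i]
  · rw [map_smul, map_add, map_smul, smul_eq_mul, smul_eq_mul, lt_inv_mul_iff₀ hden]
    nlinarith

theorem LinearMap.apply_eq_sum_smul_single {R M κ : Type*} [CommSemiring R] [AddCommMonoid M]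
    [Module R M] [Fintype κ] [DecidableEq κ] (ψ : (κ → R) →ₗ[R] M) (w : κ → R) :
    ψ w = ∑ a, w a • ψ (Pi.single a 1) := by
  conv_lhs => rw [← (LinearEquiv.piRing R M κ R).symm_apply_apply ψ]
  simp only [LinearEquiv.piRing_symm_apply, LinearEquiv.piRing_apply]

theorem exists_nonneg_sum_smul_eq_of_forall_le {κ : Type*} [Fintype κ] [Fintype ι]
    {L : ι → (κ → ℝ) →ₗ[ℝ] ℝ} {b : ι → ℝ} {d : (κ → ℝ) →ₗ[ℝ] ℝ} {β : ℝ}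
    (hne : ∃ y, ∀ i, L i y ≤ b i) (h : ∀ y, (∀ i, L i y ≤ b i) → d y ≤ β) :
    ∃ l : ι → ℝ, 0 ≤ l ∧ ∑ i, l i • L i = d ∧ ∑ i, l i * b i ≤ β := by
  classical
  let coords := LinearEquiv.piRing ℝ ℝ κ ℝ
  let gen : Option ι → (κ → ℝ) × ℝ := fun j => j.elim (0, 1) fun i => (coords (L i), b i)
  by_cases hmem : (coords d, β) ∈ PointedCone.hull ℝ (range gen)
  · obtain ⟨l, hl, hsum⟩ := PointedCone.mem_hull_range_iff.1 hmem
    rw [Fintype.sum_option] at hsum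
    obtain ⟨hfst, hsnd⟩ := Prod.ext_iff.1 hsum
    refine ⟨fun i => l (some i), fun i => hl _, coords.injective ?_, ?_⟩
    · simpa [gen, Prod.fst_sum] using hfst
    · simp only [gen, Option.elim_none, Option.elim_some, Prod.smul_mk, smul_zero, smul_eq_mul,
        mul_one, Prod.snd_add, Prod.snd_sum] at hsnd
      show ∑ i, l (some i) * b i ≤ β
      linarith [show (0 : ℝ) ≤ l none from hl none]
  · obtain ⟨g, hg, hgz⟩ := PointedCone.exists_dual_nonneg_of_notMem_hull_range gen hmem
    set y : κ → ℝ := fun a => g (Pi.single a 1, 0)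
    have hdecomp : ∀ (φ : (κ → ℝ) →ₗ[ℝ] ℝ) (r : ℝ), g (coords φ, r) = φ y + r * g (0, 1) := by
      intro φ r
      have hinl := LinearMap.apply_eq_sum_smul_single
        ((g : (κ → ℝ) × ℝ →ₗ[ℝ] ℝ).comp (LinearMap.inl ℝ (κ → ℝ) ℝ)) (coords φ)
      simp only [LinearMap.comp_apply, LinearMap.inl_apply, ContinuousLinearMap.coe_coe,
        smul_eq_mul] at hinl
      have hsplit : ((coords φ, r) : (κ → ℝ) × ℝ) = (coords φ, 0) + r • (0, 1) := by simp
      rw [hsplit, map_add, map_smul, smul_eq_mul, hinl, LinearMap.apply_eq_sum_smul_single φ y]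
      simp only [coords, y, LinearEquiv.piRing_apply, smul_eq_mul, mul_comm]
    obtain ⟨y₀, hy₀⟩ := hne
    obtain ⟨u, hu, hdu⟩ := exists_lt_of_homogeneous_solution (L := L) (d := d) (β := β) hy₀
      (w := -y) (s := g (0, 1)) (fun i => by
        have := hg (some i); simp only [gen, Option.elim, hdecomp] at this; rw [map_neg]; linarith)
      (by simpa [gen] using hg none) (by rw [hdecomp] at hgz; rw [map_neg]; linarith)
    exact absurd (h u hu) hdu.not_ge

end Farkas

theorem exists_nonneg_toll_isMinOn_of_forall_le {A : Type*} [Fintype A] (A₁ : Finset A)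
    (c : A → ℝ) {X : Set (A → ℝ)} (hX : IsPolyhedron X) {x : A → ℝ} (hx : x ∈ X)
    (h : ∀ y ∈ X, (∀ a ∈ A₁, y a ≤ x a) → ∑ a, c a * x a ≤ ∑ a, c a * y a) :
    ∃ t : A → ℝ, (∀ a, 0 ≤ t a) ∧
      IsMinOn (fun y => ∑ a, c a * y a + ∑ a ∈ A₁, t a * y a) X x := by
  classical
  obtain ⟨m, L, b, rfl⟩ := hX
  let M : Fin m ⊕ A → (A → ℝ) →ₗ[ℝ] ℝ :=
    Sum.elim L fun a => if a ∈ A₁ then LinearMap.proj a else 0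
  let B : Fin m ⊕ A → ℝ := Sum.elim b fun a => if a ∈ A₁ then x a else 0
  have hMB : ∀ y, (∀ j, M j y ≤ B j) ↔ (∀ i, L i y ≤ b i) ∧ ∀ a ∈ A₁, y a ≤ x a := by
    intro y
    simp only [Sum.forall, M, B, Sum.elim_inl, Sum.elim_inr]
    refine and_congr Iff.rfl (forall_congr' fun a => ?_)
    by_cases ha : a ∈ A₁ <;> simp [ha]
  obtain ⟨l, hl, hlM, hlB⟩ := exists_nonneg_sum_smul_eq_of_forall_le (L := M) (b := B)
    (d := -∑ a, c a • LinearMap.proj a) (β := -∑ a, c a * x a)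
    ⟨x, (hMB x).2 ⟨hx, fun _ _ => le_rfl⟩⟩ fun y hy => by
      obtain ⟨hyX, hyx⟩ := (hMB y).1 hy
      simpa using h y hyX hyx
  refine ⟨l ∘ Sum.inr, fun a => hl _, fun y hy => ?_⟩
  have hly := LinearMap.congr_fun hlM y
  simp only [Fintype.sum_sum_type, Sum.elim_inl, Sum.elim_inr, smul_ite, smul_zero,
    sum_ite_mem, Finset.univ_inter, LinearMap.add_apply, LinearMap.coe_sum, LinearMap.coe_smul,
    Finset.sum_apply, Pi.smul_apply, smul_eq_mul, LinearMap.coe_proj, Function.eval,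
    LinearMap.neg_apply, mul_ite, mul_zero, M, B] at hly hlB
  have hLb : ∑ i, l (.inl i) * L i y ≤ ∑ i, l (.inl i) * b i :=
    Finset.sum_le_sum fun i _ => mul_le_mul_of_nonneg_left (hy i) (hl _)
  show ∑ a, c a * x a + ∑ a ∈ A₁, l (.inr a) * x a ≤ ∑ a, c a * y a + ∑ a ∈ A₁, l (.inr a) * y a
  linarith

theorem stmt16_general (A : Type*) [Fintype A] (A₁ : Finset A)
    (c : A → ℝ)
    (X : Set (A → ℝ)) (hXpoly : IsPolyhedron X)
    (f : (A → ℝ) → ℝ)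
    (hf : ∀ t : A → ℝ, (∀ a, 0 ≤ t a) →
      IsLeast {s | ∃ x ∈ X, s = (∑ a, c a * x a) + ∑ a ∈ A₁, t a * x a} (f t))
    (x : A → ℝ) (hx : x ∈ X) :
    (∃ t : A → ℝ, (∀ a, 0 ≤ t a) ∧
        f t = (∑ a, c a * x a) + ∑ a ∈ A₁, t a * x a) ↔
      (∑ a, c a * x a) =
        sSup {s | ∃ t : A → ℝ, (∀ a, 0 ≤ t a) ∧
          s = f t - ∑ a ∈ A₁, t a * x a} := by
  set S := {s | ∃ t : A → ℝ, (∀ a, 0 ≤ t a) ∧ s = f t - ∑ a ∈ A₁, t a * x a}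
  constructor
  · rintro ⟨t, ht, hft⟩
    refine (IsGreatest.csSup_eq (s := S) ⟨⟨t, ht, by rw [hft]; ring⟩, ?_⟩).symm
    rintro _ ⟨t', ht', rfl⟩
    linarith [(hf t' ht').2 ⟨x, hx, rfl⟩]
  · intro hsup
    obtain ⟨t, ht, hmin⟩ := exists_nonneg_toll_isMinOn_of_forall_le A₁ c hXpoly hx
      fun y hy hyx => by
        rw [hsup]
        refine csSup_le ⟨_, 0, fun _ => le_rfl, rfl⟩ ?_
        rintro _ ⟨t, ht, rfl⟩
        have hty : ∑ a ∈ A₁, t a * y a ≤ ∑ a ∈ A₁, t a * x a :=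
          Finset.sum_le_sum fun a ha => mul_le_mul_of_nonneg_left (hyx a ha) (ht a)
        linarith [(hf t ht).2 ⟨y, hy, rfl⟩]
    exact ⟨t, ht, (hf t ht).unique ⟨⟨x, hx, rfl⟩, by rintro _ ⟨y, hy, rfl⟩; exact hmin hy⟩⟩

/-- `x ∈ X` is bilevel feasible (optimal to the follower for some
toll `t ≥ 0`) iff its base cost `⟨c, x⟩` equals `g(x_{A₁})`, the concave
conjugate of `f` over `t ≥ 0`. -/
theorem stmt16 (A : Type*) [Fintype A] (A₁ : Finset A)
    (c : A → ℝ) (hc : ∀ a, 0 ≤ c a)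
    (X : Set (A → ℝ)) (hXne : X.Nonempty) (hXpoly : IsPolyhedron X)
    (hXpos : ∀ x ∈ X, ∀ a, 0 ≤ x a)
    (f : (A → ℝ) → ℝ)
    (hf : ∀ t : A → ℝ, (∀ a, 0 ≤ t a) →
      IsLeast {s | ∃ x ∈ X, s = (∑ a, c a * x a) + ∑ a ∈ A₁, t a * x a} (f t))
    (x : A → ℝ) (hx : x ∈ X) :
    (∃ t : A → ℝ, (∀ a, 0 ≤ t a) ∧
        f t = (∑ a, c a * x a) + ∑ a ∈ A₁, t a * x a) ↔
      (∑ a, c a * x a) =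
        sSup {s | ∃ t : A → ℝ, (∀ a, 0 ≤ t a) ∧
          s = f t - ∑ a ∈ A₁, t a * x a} :=
  stmt16_general A A₁ c X hXpoly f hf x hx
end
end

section
/- Let P be a polyhedron in ℝⁿ × ℝ (an epigraph of a polyhedral convex function) and let F₁, F₂ be non-vertical faces of P with nonempty intersection. Then F₁ ∩ F₂ is a non-vertical face of P, and its projection to ℝⁿ equals the intersection of the projections of F₁ and F₂. -/
noncomputable section
open Set

/-! A functional `l` exposing a face of an epigraph has `l (0, 1) ≤ 0`, as the epigraph is
closed upwards; so with each point of the face, the graph point below it also maximises `l`.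
Two points of a face on one vertical line would put `(0, 1)` into the direction of its affine
span, hence a non-vertical face lies in the graph of `g`, on which the projection is injective
and therefore commutes with intersections. -/

theorem IsExposed.mk_apply_mem_of_mem_epigraph {E : Type*} [AddCommGroup E] [TopologicalSpace E]
    [Module ℝ E] {g : E → ℝ} {F : Set (E × ℝ)} (hF : IsExposed ℝ {p | g p.1 ≤ p.2} F)
    {w : E} {z : ℝ} (h : (w, z) ∈ F) : (w, g w) ∈ F := by
  obtain ⟨l, rfl⟩ := hF ⟨_, h⟩
  obtain ⟨hwz, hmax⟩ : g w ≤ z ∧ _ := h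
  have hline : ∀ s : ℝ, l (w, s) = l (w, z) + (s - z) * l (0, 1) := fun s => by
    rw [← smul_eq_mul, ← map_smul, ← map_add]
    simp
  have hup : l (0, 1) ≤ 0 := by
    have := hmax (w, z + 1) (show g w ≤ z + 1 by linarith)
    rw [hline] at this
    linarith
  refine ⟨le_refl (g w), fun y hy => (hmax y hy).trans ?_⟩
  rw [hline (g w)]
  nlinarith

theorem injOn_fst_of_notMem_direction {k E : Type*} [Field k] [AddCommGroup E] [Module k E]
    {F : Set (E × k)} (hF : ((0 : E), (1 : k)) ∉ (affineSpan k F).direction) :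
    InjOn Prod.fst F := by
  intro p hp q hq hpq
  refine Prod.ext hpq (sub_eq_zero.mp ?_)
  by_contra hne
  apply hF
  have hvert : p -ᵥ q = (p.2 - q.2) • ((0 : E), (1 : k)) := by
    simp [Prod.ext_iff, hpq]
  have hmem := AffineSubspace.vsub_mem_direction (subset_affineSpan k F hp)
    (subset_affineSpan k F hq)
  rw [hvert] at hmem
  have := (affineSpan k F).direction.smul_mem (p.2 - q.2)⁻¹ hmem
  rwa [smul_smul, inv_mul_cancel₀ hne, one_smul] at this

theorem NonVerticalFace.subset_graph {n : ℕ} {g : V n → ℝ} {F : Set (V n × ℝ)}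
    (hF : NonVerticalFace (epi g) F) : F ⊆ {p | p.2 = g p.1} := fun _ hp =>
  congrArg Prod.snd <| injOn_fst_of_notMem_direction hF.2.2 hp
    (hF.1.mk_apply_mem_of_mem_epigraph hp) rfl

theorem NonVerticalFace.inter {n : ℕ} {P F₁ F₂ : Set (V n × ℝ)} (h₁ : NonVerticalFace P F₁)
    (h₂ : NonVerticalFace P F₂) (hne : (F₁ ∩ F₂).Nonempty) : NonVerticalFace P (F₁ ∩ F₂) :=
  ⟨h₁.1.inter h₂.1, hne, fun hmem =>
    h₁.2.2 (AffineSubspace.direction_le (affineSpan_mono ℝ inter_subset_left) hmem)⟩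

theorem stmt19_general (n : ℕ) (g : V n → ℝ)
    (F₁ F₂ : Set (V n × ℝ))
    (h₁ : NonVerticalFace (epi g) F₁) (h₂ : NonVerticalFace (epi g) F₂)
    (hne : (F₁ ∩ F₂).Nonempty) :
    NonVerticalFace (epi g) (F₁ ∩ F₂) ∧
      Prod.fst '' (F₁ ∩ F₂) = (Prod.fst '' F₁) ∩ (Prod.fst '' F₂) := by
  have hgraph : InjOn Prod.fst {p : V n × ℝ | p.2 = g p.1} := fun p hp q hq hpq =>
    Prod.ext hpq (by rw [show p.2 = g p.1 from hp, show q.2 = g q.1 from hq, hpq])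
  exact ⟨h₁.inter h₂ hne, hgraph.image_inter h₁.subset_graph h₂.subset_graph⟩

/-- the intersection of two non-vertical faces of the epigraph of
a polyhedral convex function, if nonempty, is a non-vertical face, and its
projection is the intersection of the projections. -/
theorem stmt19 (n : ℕ) (g : V n → ℝ)
    (hconv : ConvexOn ℝ univ g) (hpoly : IsPolyhedron (epi g))
    (F₁ F₂ : Set (V n × ℝ))
    (h₁ : NonVerticalFace (epi g) F₁) (h₂ : NonVerticalFace (epi g) F₂)
    (hne : (F₁ ∩ F₂).Nonempty) :
    NonVerticalFace (epi g) (F₁ ∩ F₂) ∧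
      Prod.fst '' (F₁ ∩ F₂) = (Prod.fst '' F₁) ∩ (Prod.fst '' F₂) :=
  stmt19_general n g F₁ F₂ h₁ h₂ hne
end
end
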